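/- arXiv:2601.14907 — 8 statements merged into one kernel-verified Lean document; each statement's English description precedes it below -/
import Mathlib

section
/- Let α : G ↷ A be an action of a discrete group G on a Banach algebra A with a contractive two-sided approximate unit, and let E be a Banach space. Suppose Ψ : ℓ¹(G, A) → B(E) is a contractive linear map satisfying Ψ(a*b) = Ψ(a)Ψ(b) for all a, b ∈ ℓ¹(G, A), which is non-degenerate in the sense that the linear span of { Ψ(a)ξ : a ∈ ℓ¹(G, A), ξ ∈ E } is dense in E. Then there exists a covariant representation (π, v) of α on E such that Ψ(a) = Σ_{g∈G} π(a(g)) v_g (norm-convergent series) for all a ∈ ℓ¹(G, A). -/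
/-!
Take `π b := Ψ (δ₁ b)` for the point mass `δ₁ b`. Writing `λ_g a := α_g ∘ a ∘ (g⁻¹ * ·)`, one has
`Ψ (δ_g u) (Ψ a ξ) = Ψ (u · λ_g a) ξ`, and `u · λ_g a → λ_g a` in `ℓ¹` along the approximate unit.
So the contractions `Ψ (δ_g u)` converge strongly on the dense span of the vectors `Ψ a ξ`, and
their limit `v_g` is a contraction with `v_g (Ψ a ξ) = Ψ (λ_g a) ξ`. The group law, covariance and
`π b * v_g = Ψ (δ_g b)` can then be checked on the vectors `Ψ a ξ`, and the integrated form is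
continuity of `Ψ` applied to `a = ∑_g δ_g (a g)` in `ℓ¹(G, A)`.
-/

open Filter Topology

open scoped lp

theorem exists_clm_tendsto_apply_of_dense_span {ι 𝕜 E F : Type*} [NontriviallyNormedField 𝕜]
    [NormedAddCommGroup E] [NormedSpace 𝕜 E] [NormedAddCommGroup F] [NormedSpace 𝕜 F]
    [CompleteSpace F] {l : Filter ι} [l.NeBot] {T : ι → E →L[𝕜] F} {C : ℝ}
    (hT : ∀ᶠ i in l, ‖T i‖ ≤ C) {S : Set E} (hS : Dense (Submodule.span 𝕜 S : Set E))
    (hconv : ∀ x ∈ S, ∃ y, Tendsto (fun i => T i x) l (𝓝 y)) :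
    ∃ V : E →L[𝕜] F, (∀ x, ‖V x‖ ≤ C * ‖x‖) ∧ ∀ x ∈ S, Tendsto (fun i => T i x) l (𝓝 (V x)) := by
  set D := Submodule.span 𝕜 S
  have hconvD : ∀ x ∈ D, ∃ y, Tendsto (fun i => T i x) l (𝓝 y) := by
    intro x hx
    induction hx using Submodule.span_induction with
    | mem x hx => exact hconv x hx
    | zero => exact ⟨0, by simp⟩
    | add x y _ _ hx hy =>
      obtain ⟨x', hx'⟩ := hx
      obtain ⟨y', hy'⟩ := hy
      exact ⟨x' + y', by simpa using hx'.add hy'⟩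
    | smul c x _ hx =>
      obtain ⟨x', hx'⟩ := hx
      exact ⟨c • x', by simpa using hx'.const_smul c⟩
  choose! limit hlim using hconvD
  let f : D →ₗ[𝕜] F := linearMapOfTendsto (fun x : D => limit x)
    (fun i => (T i).toLinearMap ∘ₗ D.subtype) (tendsto_pi_nhds.2 fun x => hlim x x.2)
  have hf : ∀ x : D, ‖f x‖ ≤ C * ‖D.subtype x‖ := fun x =>
    le_of_tendsto (hlim x x.2).norm (hT.mono fun i hi => (T i).le_of_opNorm_le hi x)
  have hdense : DenseRange D.subtype := by simpa [DenseRange] using hS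
  refine ⟨f.extendOfNorm D.subtype, LinearMap.norm_extendOfNorm_apply_le hdense C hf,
    fun x hx => ?_⟩
  have hxD : x ∈ D := Submodule.subset_span hx
  have hV : f.extendOfNorm D.subtype x = limit x :=
    LinearMap.extendOfNorm_eq hdense ⟨C, hf⟩ ⟨x, hxD⟩
  exact hV ▸ hlim x hxD

theorem tendsto_tsum_norm_mul_sub_self {ι A : Type*} [NonUnitalNormedRing A] {l : Filter A}
    (hbd : ∀ᶠ u in l, ‖u‖ ≤ 1) (happ : ∀ a : A, Tendsto (fun u => u * a) l (𝓝 a))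
    {b : ι → A} (hb : Summable (fun x => ‖b x‖)) :
    Tendsto (fun u => ∑' x, ‖u * b x - b x‖) l (𝓝 0) := by
  have hpt : ∀ x, Tendsto (fun u => ‖u * b x - b x‖) l (𝓝 0) := fun x =>
    tendsto_iff_norm_sub_tendsto_zero.1 (happ (b x))
  have hdom : ∀ᶠ u in l, ∀ x, ‖‖u * b x - b x‖‖ ≤ 2 * ‖b x‖ := by
    filter_upwards [hbd] with u hu x
    calc ‖‖u * b x - b x‖‖ = ‖u * b x - b x‖ := norm_norm _
      _ ≤ ‖u‖ * ‖b x‖ + ‖b x‖ := (norm_sub_le _ _).trans (by gcongr; exact norm_mul_le _ _)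
      _ ≤ 2 * ‖b x‖ := by nlinarith [norm_nonneg (b x)]
  simpa using tendsto_tsum_of_dominated_convergence (hb.mul_left 2) hpt hdom

theorem Summable.norm_mul_left {ι R : Type*} [NonUnitalSeminormedRing R] (u : R) {b : ι → R}
    (hb : Summable (fun x => ‖b x‖)) : Summable (fun x => ‖u * b x‖) :=
  .of_nonneg_of_le (fun _ => norm_nonneg _) (fun x => norm_mul_le u (b x)) (hb.mul_left ‖u‖)

theorem Summable.norm_sub {ι E : Type*} [SeminormedAddCommGroup E] {a b : ι → E}
    (ha : Summable (fun x => ‖a x‖)) (hb : Summable (fun x => ‖b x‖)) :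
    Summable (fun x => ‖a x - b x‖) :=
  .of_nonneg_of_le (fun _ => norm_nonneg _) (fun _ => norm_sub_le _ _) (ha.add hb)

theorem hasSum_norm_pi_single {ι A : Type*} [DecidableEq ι] [NormedAddCommGroup A] (i : ι)
    (b : A) : HasSum (fun j => ‖(Pi.single i b : ι → A) j‖) ‖b‖ := by
  simpa [Pi.apply_single (fun _ => norm) (fun _ => norm_zero)] using hasSum_pi_single i ‖b‖

theorem memℓp_one_iff {ι A : Type*} [NormedAddCommGroup A] {a : ι → A} :
    Memℓp a 1 ↔ Summable (fun i => ‖a i‖) := by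
  simp [memℓp_gen_iff (p := 1) (by norm_num)]

theorem lp.norm_eq_tsum_norm_of_one {ι A : Type*} [NormedAddCommGroup A] (a : ℓ¹(ι, A)) :
    ‖a‖ = ∑' i, ‖a i‖ := by
  simpa using lp.norm_eq_tsum_rpow (by norm_num) a

section TwistedTranslate

variable {G A : Type*} [Group G]

def twistedTranslate (α : G → A → A) (g : G) (a : G → A) : G → A :=
  fun h => α g (a (g⁻¹ * h))

variable {α : G → A → A}

theorem twistedTranslate_one (hα_one : ∀ a : A, α 1 a = a) (a : G → A) :
    twistedTranslate α 1 a = a := by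
  funext x
  simp [twistedTranslate, hα_one]

theorem twistedTranslate_mul (hα_hom : ∀ g h (a : A), α (g * h) a = α g (α h a))
    (g h : G) (a : G → A) :
    twistedTranslate α (g * h) a = twistedTranslate α g (twistedTranslate α h a) := by
  funext x
  simp [twistedTranslate, hα_hom, mul_assoc]

theorem twistedTranslate_mul_left [Mul A] (hα_mul : ∀ g (a b : A), α g (a * b) = α g a * α g b)
    (g : G) (b : A) (a : G → A) :
    twistedTranslate α g (fun x => b * a x) = fun x => α g b * twistedTranslate α g a x := by
  funext x
  simp [twistedTranslate, hα_mul]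

theorem summable_norm_twistedTranslate [Norm A] (hα_norm : ∀ g (a : A), ‖α g a‖ = ‖a‖) (g : G)
    {a : G → A} (ha : Summable (fun h => ‖a h‖)) :
    Summable (fun h => ‖twistedTranslate α g a h‖) := by
  simpa [twistedTranslate, hα_norm, Function.comp_def] using
    (Equiv.mulLeft g⁻¹).summable_iff.2 ha

end TwistedTranslate

noncomputable def twistedConvolution {G A : Type*} [Group G] [NonUnitalNonAssocSemiring A]
    [TopologicalSpace A] (α : G → A → A) (a b : G → A) : G → A :=
  fun g => ∑' h, a h * α h (b (h⁻¹ * g))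

theorem twistedConvolution_single_left {G A : Type*} [Group G] [NonUnitalNonAssocSemiring A]
    [TopologicalSpace A] [DecidableEq G] (α : G → A → A) (g : G) (u : A) (a : G → A) :
    twistedConvolution α (Pi.single g u) a = fun x => u * twistedTranslate α g a x := by
  funext x
  rw [twistedConvolution, tsum_eq_single g fun h hh => by simp [hh]]
  simp [twistedTranslate]

structure IsContractiveL1Rep {G A E : Type*} [Group G] [NonUnitalNormedRing A]
    [NormedSpace ℂ A] [NormedAddCommGroup E] [NormedSpace ℂ E]
    (α : G → A → A) (Ψ : (G → A) → E →L[ℂ] E) : Prop where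
  map_add : ∀ a b : G → A, Summable (fun g => ‖a g‖) → Summable (fun g => ‖b g‖) →
    Ψ (a + b) = Ψ a + Ψ b
  map_smul : ∀ (c : ℂ) (a : G → A), Summable (fun g => ‖a g‖) → Ψ (c • a) = c • Ψ a
  norm_le : ∀ a : G → A, Summable (fun g => ‖a g‖) → ‖Ψ a‖ ≤ ∑' g, ‖a g‖
  map_twistedConvolution : ∀ a b : G → A, Summable (fun g => ‖a g‖) →
    Summable (fun g => ‖b g‖) → Ψ (twistedConvolution α a b) = Ψ a * Ψ b

def essentialSpan {G A E : Type*} [Norm A] [NormedAddCommGroup E] [NormedSpace ℂ E]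
    (Ψ : (G → A) → E →L[ℂ] E) : Submodule ℂ E :=
  Submodule.span ℂ {x : E | ∃ (a : G → A) (ξ : E), Summable (fun g => ‖a g‖) ∧ Ψ a ξ = x}

def ImplementsTranslations {G A E : Type*} [Group G] [Norm A] [NormedAddCommGroup E]
    [NormedSpace ℂ E] (α : G → A → A) (Ψ : (G → A) → E →L[ℂ] E) (v : G → E →L[ℂ] E) : Prop :=
  ∀ g a ξ, Summable (fun x => ‖a x‖) → v g (Ψ a ξ) = Ψ (twistedTranslate α g a) ξ

theorem ext_of_dense_essentialSpan {G A E : Type*} [Norm A] [NormedAddCommGroup E]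
    [NormedSpace ℂ E] {Ψ : (G → A) → E →L[ℂ] E} (hD : Dense (essentialSpan Ψ : Set E))
    {S T : E →L[ℂ] E} (h : ∀ a ξ, Summable (fun g => ‖a g‖) → S (Ψ a ξ) = T (Ψ a ξ)) :
    S = T :=
  ContinuousLinearMap.ext_on hD (by rintro _ ⟨a, ξ, ha, rfl⟩; exact h a ξ ha)

namespace IsContractiveL1Rep

variable {G A E : Type*} [Group G] [NonUnitalNormedRing A] [NormedSpace ℂ A]
  [NormedAddCommGroup E] [NormedSpace ℂ E] {α : G → A → A} {Ψ : (G → A) → E →L[ℂ] E}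

theorem map_sub (hΨ : IsContractiveL1Rep α Ψ) {a b : G → A} (ha : Summable (fun g => ‖a g‖))
    (hb : Summable (fun g => ‖b g‖)) : Ψ (a - b) = Ψ a - Ψ b := by
  rw [eq_sub_iff_add_eq, ← hΨ.map_add (a - b) b (ha.norm_sub hb) hb, sub_add_cancel]

theorem norm_sub_le (hΨ : IsContractiveL1Rep α Ψ) {a b : G → A} (ha : Summable (fun g => ‖a g‖))
    (hb : Summable (fun g => ‖b g‖)) : ‖Ψ a - Ψ b‖ ≤ ∑' g, ‖a g - b g‖ := by
  rw [← hΨ.map_sub ha hb]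
  exact hΨ.norm_le _ (ha.norm_sub hb)

variable [DecidableEq G]

theorem norm_single_le (hΨ : IsContractiveL1Rep α Ψ) (g : G) (u : A) :
    ‖Ψ (Pi.single g u)‖ ≤ ‖u‖ :=
  (hΨ.norm_le _ (hasSum_norm_pi_single g u).summable).trans_eq (hasSum_norm_pi_single g u).tsum_eq

theorem map_single_add (hΨ : IsContractiveL1Rep α Ψ) (g : G) (b c : A) :
    Ψ (Pi.single g (b + c)) = Ψ (Pi.single g b) + Ψ (Pi.single g c) := by
  rw [Pi.single_add, hΨ.map_add _ _ (hasSum_norm_pi_single g b).summable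
    (hasSum_norm_pi_single g c).summable]

theorem map_single_smul (hΨ : IsContractiveL1Rep α Ψ) (g : G) (c : ℂ) (b : A) :
    Ψ (Pi.single g (c • b)) = c • Ψ (Pi.single g b) := by
  rw [Pi.single_smul, hΨ.map_smul _ _ (hasSum_norm_pi_single g b).summable]

theorem single_mul (hΨ : IsContractiveL1Rep α Ψ) (g : G) (u : A) {a : G → A}
    (ha : Summable (fun g => ‖a g‖)) :
    Ψ (Pi.single g u) * Ψ a = Ψ (fun x => u * twistedTranslate α g a x) := by
  rw [← hΨ.map_twistedConvolution _ _ (hasSum_norm_pi_single g u).summable ha,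
    twistedConvolution_single_left]

theorem single_one_mul_single_one (hΨ : IsContractiveL1Rep α Ψ) (hα_one : ∀ a : A, α 1 a = a)
    (b c : A) : Ψ (Pi.single 1 b) * Ψ (Pi.single 1 c) = Ψ (Pi.single 1 (b * c)) := by
  rw [hΨ.single_mul 1 b (hasSum_norm_pi_single 1 c).summable, twistedTranslate_one hα_one]
  congr 1
  funext x
  exact Pi.apply_single (fun _ => (b * ·)) (fun _ => mul_zero b) 1 c x

theorem hasSum_single (hΨ : IsContractiveL1Rep α Ψ) {a : G → A}
    (ha : Summable (fun g => ‖a g‖)) : HasSum (fun g => Ψ (Pi.single g (a g))) (Ψ a) := by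
  have hsum (b : ℓ¹(G, A)) : Summable (fun g => ‖b g‖) := memℓp_one_iff.1 b.2
  let Ψ₁ : ℓ¹(G, A) →L[ℂ] E →L[ℂ] E := LinearMap.mkContinuous
    { toFun := fun b => Ψ b
      map_add' := fun b c => hΨ.map_add b c (hsum b) (hsum c)
      map_smul' := fun c b => hΨ.map_smul c b (hsum b) } 1
    fun b => (hΨ.norm_le b (hsum b)).trans_eq (by rw [one_mul, lp.norm_eq_tsum_norm_of_one])
  exact Ψ₁.hasSum (lp.hasSum_single ENNReal.one_ne_top ⟨a, memℓp_one_iff.2 ha⟩)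

theorem tendsto_single_apply (hΨ : IsContractiveL1Rep α Ψ)
    (hα_norm : ∀ g (a : A), ‖α g a‖ = ‖a‖) {l : Filter A} (hbd : ∀ᶠ u in l, ‖u‖ ≤ 1)
    (happ : ∀ a : A, Tendsto (fun u => u * a) l (𝓝 a)) (g : G) {a : G → A}
    (ha : Summable (fun g => ‖a g‖)) (ξ : E) :
    Tendsto (fun u => Ψ (Pi.single g u) (Ψ a ξ)) l (𝓝 (Ψ (twistedTranslate α g a) ξ)) := by
  set b := twistedTranslate α g a
  have hb : Summable (fun x => ‖b x‖) := summable_norm_twistedTranslate hα_norm g ha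
  have hbound (u : A) :
      ‖Ψ (Pi.single g u) (Ψ a ξ) - Ψ b ξ‖ ≤ (∑' x, ‖u * b x - b x‖) * ‖ξ‖ :=
    calc ‖Ψ (Pi.single g u) (Ψ a ξ) - Ψ b ξ‖ = ‖(Ψ (fun x => u * b x) - Ψ b) ξ‖ := by
          rw [← mul_apply_eq_comp, hΨ.single_mul g u ha]; rfl
      _ ≤ ‖Ψ (fun x => u * b x) - Ψ b‖ * ‖ξ‖ := ContinuousLinearMap.le_opNorm _ _
      _ ≤ (∑' x, ‖u * b x - b x‖) * ‖ξ‖ := by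
          gcongr
          exact hΨ.norm_sub_le (hb.norm_mul_left u) hb
  rw [tendsto_iff_norm_sub_tendsto_zero]
  refine squeeze_zero (fun _ => norm_nonneg _) hbound ?_
  simpa using (tendsto_tsum_norm_mul_sub_self hbd happ hb).mul_const ‖ξ‖

theorem exists_translations [CompleteSpace E] (hΨ : IsContractiveL1Rep α Ψ)
    (hα_norm : ∀ g (a : A), ‖α g a‖ = ‖a‖) {l : Filter A} [l.NeBot] (hbd : ∀ᶠ u in l, ‖u‖ ≤ 1)
    (happ : ∀ a : A, Tendsto (fun u => u * a) l (𝓝 a)) (hD : Dense (essentialSpan Ψ : Set E)) :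
    ∃ v : G → E →L[ℂ] E, (∀ g x, ‖v g x‖ ≤ ‖x‖) ∧ ImplementsTranslations α Ψ v := by
  have hV (g : G) : ∃ V : E →L[ℂ] E, (∀ x, ‖V x‖ ≤ ‖x‖) ∧
      ∀ a ξ, Summable (fun x => ‖a x‖) → V (Ψ a ξ) = Ψ (twistedTranslate α g a) ξ := by
    obtain ⟨V, hV_le, hV_lim⟩ := exists_clm_tendsto_apply_of_dense_span (C := 1)
      (hbd.mono fun u hu => (hΨ.norm_single_le g u).trans hu) hD
      (by rintro _ ⟨a, ξ, ha, rfl⟩; exact ⟨_, hΨ.tendsto_single_apply hα_norm hbd happ g ha ξ⟩)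
    refine ⟨V, fun x => (hV_le x).trans_eq (one_mul _), fun a ξ ha => ?_⟩
    exact tendsto_nhds_unique (hV_lim _ ⟨a, ξ, ha, rfl⟩)
      (hΨ.tendsto_single_apply hα_norm hbd happ g ha ξ)
  choose v hv_le hv using hV
  exact ⟨v, hv_le, hv⟩

theorem single_one_apply (hΨ : IsContractiveL1Rep α Ψ) (hα_one : ∀ a : A, α 1 a = a) (b : A)
    {a : G → A} (ha : Summable (fun g => ‖a g‖)) (ξ : E) :
    Ψ (Pi.single 1 b) (Ψ a ξ) = Ψ (fun x => b * a x) ξ := by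
  rw [← mul_apply_eq_comp, hΨ.single_mul 1 b ha, twistedTranslate_one hα_one]

end IsContractiveL1Rep

namespace ImplementsTranslations

section

variable {G A E : Type*} [Group G] [Norm A] [NormedAddCommGroup E] [NormedSpace ℂ E]
  {α : G → A → A} {Ψ : (G → A) → E →L[ℂ] E} {v : G → E →L[ℂ] E}

theorem map_one (hv : ImplementsTranslations α Ψ v) (hα_one : ∀ a : A, α 1 a = a)
    (hD : Dense (essentialSpan Ψ : Set E)) : v 1 = 1 :=
  ext_of_dense_essentialSpan hD fun a ξ ha => by
    rw [hv 1 a ξ ha, twistedTranslate_one hα_one, one_apply_eq_self]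

theorem map_mul (hv : ImplementsTranslations α Ψ v) (hα_norm : ∀ g (a : A), ‖α g a‖ = ‖a‖)
    (hα_hom : ∀ g h (a : A), α (g * h) a = α g (α h a)) (hD : Dense (essentialSpan Ψ : Set E))
    (g h : G) : v (g * h) = v g * v h :=
  ext_of_dense_essentialSpan hD fun a ξ ha => by
    rw [mul_apply_eq_comp, hv h a ξ ha, hv g _ ξ (summable_norm_twistedTranslate hα_norm h ha),
      hv _ a ξ ha, twistedTranslate_mul hα_hom]

theorem norm_apply (hv : ImplementsTranslations α Ψ v) (hα_one : ∀ a : A, α 1 a = a)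
    (hα_norm : ∀ g (a : A), ‖α g a‖ = ‖a‖) (hα_hom : ∀ g h (a : A), α (g * h) a = α g (α h a))
    (hD : Dense (essentialSpan Ψ : Set E)) (hv_le : ∀ g x, ‖v g x‖ ≤ ‖x‖) (g : G) (ξ : E) :
    ‖v g ξ‖ = ‖ξ‖ := by
  refine (hv_le g ξ).antisymm ?_
  calc ‖ξ‖ = ‖v g⁻¹ (v g ξ)‖ := by
        rw [← mul_apply_eq_comp, ← hv.map_mul hα_norm hα_hom hD, inv_mul_cancel,
          hv.map_one hα_one hD, one_apply_eq_self]
    _ ≤ ‖v g ξ‖ := hv_le g⁻¹ _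

end

variable {G A E : Type*} [Group G] [NonUnitalNormedRing A] [NormedSpace ℂ A]
  [NormedAddCommGroup E] [NormedSpace ℂ E] [DecidableEq G]
  {α : G → A → A} {Ψ : (G → A) → E →L[ℂ] E} {v : G → E →L[ℂ] E}

theorem covariant (hv : ImplementsTranslations α Ψ v) (hΨ : IsContractiveL1Rep α Ψ)
    (hα_one : ∀ a : A, α 1 a = a) (hα_norm : ∀ g (a : A), ‖α g a‖ = ‖a‖)
    (hα_mul : ∀ g (a b : A), α g (a * b) = α g a * α g b) (hD : Dense (essentialSpan Ψ : Set E))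
    (g : G) (b : A) : v g * Ψ (Pi.single 1 b) = Ψ (Pi.single 1 (α g b)) * v g :=
  ext_of_dense_essentialSpan hD fun a ξ ha => by
    rw [mul_apply_eq_comp, mul_apply_eq_comp, hΨ.single_one_apply hα_one b ha,
      hv g _ ξ (ha.norm_mul_left b), hv g a ξ ha, hΨ.single_one_apply hα_one _ (summable_norm_twistedTranslate hα_norm g ha),
      twistedTranslate_mul_left hα_mul]

theorem single_one_mul (hv : ImplementsTranslations α Ψ v) (hΨ : IsContractiveL1Rep α Ψ)
    (hα_one : ∀ a : A, α 1 a = a) (hα_norm : ∀ g (a : A), ‖α g a‖ = ‖a‖)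
    (hD : Dense (essentialSpan Ψ : Set E)) (g : G) (b : A) :
    Ψ (Pi.single 1 b) * v g = Ψ (Pi.single g b) :=
  ext_of_dense_essentialSpan hD fun a ξ ha => by
    rw [mul_apply_eq_comp, hv g a ξ ha,
      hΨ.single_one_apply hα_one b (summable_norm_twistedTranslate hα_norm g ha),
      ← mul_apply_eq_comp, hΨ.single_mul g b ha]

end ImplementsTranslations

namespace IsContractiveL1Rep

variable {G A E : Type*} [Group G] [NonUnitalNormedRing A] [NormedSpace ℂ A]
  [NormedAddCommGroup E] [NormedSpace ℂ E] [DecidableEq G]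
  {α : G → A → A} {Ψ : (G → A) → E →L[ℂ] E}

theorem dense_span_range_single_one [CompleteSpace E] (hΨ : IsContractiveL1Rep α Ψ)
    (hD : Dense (essentialSpan Ψ : Set E)) {v : G → E →L[ℂ] E}
    (hπv : ∀ g b, Ψ (Pi.single 1 b) * v g = Ψ (Pi.single g b)) :
    Dense (Submodule.span ℂ {x : E | ∃ (b : A) (ξ : E), Ψ (Pi.single 1 b) ξ = x} : Set E) := by
  set P := Submodule.span ℂ {x : E | ∃ (b : A) (ξ : E), Ψ (Pi.single 1 b) ξ = x}
  have hsub : essentialSpan Ψ ≤ P.topologicalClosure := by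
    refine Submodule.span_le.2 ?_
    rintro _ ⟨a, ξ, ha, rfl⟩
    have hsum : HasSum (fun g => Ψ (Pi.single 1 (a g)) (v g ξ)) (Ψ a ξ) := by
      simpa [← mul_apply_eq_comp, hπv] using
        (ContinuousLinearMap.apply ℂ E ξ).hasSum (hΨ.hasSum_single ha)
    exact P.isClosed_topologicalClosure.mem_of_tendsto hsum
      (.of_forall fun s => P.le_topologicalClosure
        (P.sum_mem fun g _ => Submodule.subset_span ⟨a g, v g ξ, rfl⟩))
  have hPdense : Dense (P.topologicalClosure : Set E) := hD.mono hsub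
  rwa [Submodule.topologicalClosure_coe, dense_closure] at hPdense

end IsContractiveL1Rep

theorem group_action_disintegration_general
    {G A E : Type*} [Group G] [NonUnitalNormedRing A] [NormedSpace ℂ A]
    [NormedAddCommGroup E] [NormedSpace ℂ E] [CompleteSpace E]
    -- the action α : G ↷ A by isometric automorphisms
    (α : G → A → A)
    (hα_mul : ∀ g (a b : A), α g (a * b) = α g a * α g b)
    (hα_norm : ∀ g (a : A), ‖α g a‖ = ‖a‖)
    (hα_one : ∀ a : A, α 1 a = a)
    (hα_hom : ∀ g h (a : A), α (g * h) a = α g (α h a))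
    -- A has a contractive two-sided approximate unit
    (hA : ∃ l : Filter A, l.NeBot ∧ (∀ᶠ x in l, ‖x‖ ≤ 1) ∧
      ∀ a : A, Tendsto (fun x => x * a) l (𝓝 a) ∧ Tendsto (fun x => a * x) l (𝓝 a))
    -- Ψ : ℓ¹(G,A) → B(E) is a contractive linear multiplicative map
    (Ψ : (G → A) → E →L[ℂ] E)
    (hΨ_add : ∀ a b : G → A, Summable (fun g => ‖a g‖) → Summable (fun g => ‖b g‖) →
      Ψ (a + b) = Ψ a + Ψ b)
    (hΨ_smul : ∀ (c : ℂ) (a : G → A), Summable (fun g => ‖a g‖) → Ψ (c • a) = c • Ψ a)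
    (hΨ_norm : ∀ a : G → A, Summable (fun g => ‖a g‖) → ‖Ψ a‖ ≤ ∑' g, ‖a g‖)
    (hΨ_mul : ∀ a b : G → A, Summable (fun g => ‖a g‖) → Summable (fun g => ‖b g‖) →
      Ψ (fun g => ∑' h, a h * α h (b (h⁻¹ * g))) = Ψ a * Ψ b)
    -- Ψ is non-degenerate
    (hΨ_nondeg : Dense (↑(Submodule.span ℂ
      {x : E | ∃ (a : G → A) (ξ : E), Summable (fun g => ‖a g‖) ∧ Ψ a ξ = x}) : Set E)) :
    -- then Ψ is the integrated form of a covariant representation (π, v) of α on E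
    ∃ (π : A → E →L[ℂ] E) (v : G → E →L[ℂ] E),
      (∀ a, ‖π a‖ ≤ ‖a‖) ∧
      (∀ a b, π (a + b) = π a + π b) ∧
      (∀ (c : ℂ) (a : A), π (c • a) = c • π a) ∧
      (∀ a b, π (a * b) = π a * π b) ∧
      Dense (↑(Submodule.span ℂ {x : E | ∃ (a : A) (ξ : E), π a ξ = x}) : Set E) ∧
      v 1 = 1 ∧
      (∀ g h, v (g * h) = v g * v h) ∧
      (∀ g (ξ : E), ‖v g ξ‖ = ‖ξ‖) ∧
      (∀ g (a : A), v g * π a = π (α g a) * v g) ∧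
      ∀ a : G → A, Summable (fun g => ‖a g‖) →
        HasSum (fun g => π (a g) * v g) (Ψ a) := by
  classical
  obtain ⟨l, hl, hbd, happ⟩ := hA
  have hΨ : IsContractiveL1Rep α Ψ := ⟨hΨ_add, hΨ_smul, hΨ_norm, hΨ_mul⟩
  obtain ⟨v, hv_le, hv⟩ := hΨ.exists_translations hα_norm hbd (fun a => (happ a).1) hΨ_nondeg
  have hπv := hv.single_one_mul hΨ hα_one hα_norm hΨ_nondeg
  refine ⟨fun b => Ψ (Pi.single 1 b), v, hΨ.norm_single_le 1, hΨ.map_single_add 1,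
    hΨ.map_single_smul 1, fun b c => (hΨ.single_one_mul_single_one hα_one b c).symm,
    hΨ.dense_span_range_single_one hΨ_nondeg hπv, hv.map_one hα_one hΨ_nondeg,
    hv.map_mul hα_norm hα_hom hΨ_nondeg, hv.norm_apply hα_one hα_norm hα_hom hΨ_nondeg hv_le,
    hv.covariant hΨ hα_one hα_norm hα_mul hΨ_nondeg, fun a ha => ?_⟩
  simpa only [hπv] using hΨ.hasSum_single ha

/-- Disintegration for group actions: every non-degenerate contractive
multiplicative representation `Ψ` of `ℓ¹(G,A)` on a Banach space `E` is the integrated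
form `Ψ(a) = ∑_g π(a g) v_g` of a covariant representation `(π, v)` of `α : G ↷ A`. -/
theorem group_action_disintegration
    {G A E : Type*} [Group G] [NonUnitalNormedRing A] [NormedSpace ℂ A]
    [NormedAddCommGroup E] [NormedSpace ℂ E] [CompleteSpace E]
    -- the action α : G ↷ A by isometric automorphisms
    (α : G → A → A)
    (hα_add : ∀ g (a b : A), α g (a + b) = α g a + α g b)
    (hα_smul : ∀ g (c : ℂ) (a : A), α g (c • a) = c • α g a)
    (hα_mul : ∀ g (a b : A), α g (a * b) = α g a * α g b)
    (hα_norm : ∀ g (a : A), ‖α g a‖ = ‖a‖)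
    (hα_one : ∀ a : A, α 1 a = a)
    (hα_hom : ∀ g h (a : A), α (g * h) a = α g (α h a))
    -- A has a contractive two-sided approximate unit
    (hA : ∃ l : Filter A, l.NeBot ∧ (∀ᶠ x in l, ‖x‖ ≤ 1) ∧
      ∀ a : A, Tendsto (fun x => x * a) l (𝓝 a) ∧ Tendsto (fun x => a * x) l (𝓝 a))
    -- Ψ : ℓ¹(G,A) → B(E) is a contractive linear multiplicative map
    (Ψ : (G → A) → E →L[ℂ] E)
    (hΨ_add : ∀ a b : G → A, Summable (fun g => ‖a g‖) → Summable (fun g => ‖b g‖) →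
      Ψ (a + b) = Ψ a + Ψ b)
    (hΨ_smul : ∀ (c : ℂ) (a : G → A), Summable (fun g => ‖a g‖) → Ψ (c • a) = c • Ψ a)
    (hΨ_norm : ∀ a : G → A, Summable (fun g => ‖a g‖) → ‖Ψ a‖ ≤ ∑' g, ‖a g‖)
    (hΨ_mul : ∀ a b : G → A, Summable (fun g => ‖a g‖) → Summable (fun g => ‖b g‖) →
      Ψ (fun g => ∑' h, a h * α h (b (h⁻¹ * g))) = Ψ a * Ψ b)
    -- Ψ is non-degenerate
    (hΨ_nondeg : Dense (↑(Submodule.span ℂ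
      {x : E | ∃ (a : G → A) (ξ : E), Summable (fun g => ‖a g‖) ∧ Ψ a ξ = x}) : Set E)) :
    -- then Ψ is the integrated form of a covariant representation (π, v) of α on E
    ∃ (π : A → E →L[ℂ] E) (v : G → E →L[ℂ] E),
      (∀ a, ‖π a‖ ≤ ‖a‖) ∧
      (∀ a b, π (a + b) = π a + π b) ∧
      (∀ (c : ℂ) (a : A), π (c • a) = c • π a) ∧
      (∀ a b, π (a * b) = π a * π b) ∧
      Dense (↑(Submodule.span ℂ {x : E | ∃ (a : A) (ξ : E), π a ξ = x}) : Set E) ∧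
      v 1 = 1 ∧
      (∀ g h, v (g * h) = v g * v h) ∧
      (∀ g (ξ : E), ‖v g ξ‖ = ‖ξ‖) ∧
      (∀ g (a : A), v g * π a = π (α g a) * v g) ∧
      ∀ a : G → A, Summable (fun g => ‖a g‖) →
        HasSum (fun g => π (a g) * v g) (Ψ a) :=
  group_action_disintegration_general α hα_mul hα_norm hα_one hα_hom hA Ψ hΨ_add hΨ_smul hΨ_norm
    hΨ_mul hΨ_nondeg
end

section
/- Let α : S ↷ A be an inverse semigroup action on a Banach algebra A and let f, g : S → A satisfy f(t) ∈ I_t and g(t) ∈ I_t for all t ∈ S, with Σ_{t∈S} ‖f(t)‖ < ∞ and Σ_{t∈S} ‖g(t)‖ < ∞. Then: (i) for all s, t ∈ S the element α_s(α_{s*}(f(s)) g(t)) lies in I_{st}; (ii) for each r ∈ S the family (α_s(α_{s*}(f(s)) g(t)))_{(s,t): st = r} is absolutely summable, so (f*g)(r) := Σ_{st=r} α_s(α_{s*}(f(s)) g(t)) is a well-defined element of I_r; and (iii) Σ_{r∈S} ‖(f*g)(r)‖ ≤ (Σ_{s∈S} ‖f(s)‖)(Σ_{t∈S} ‖g(t)‖).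 -/
set_option autoImplicit false

open Filter Topology

/-- An inverse semigroup: every element `t` has a generalized inverse `sInv t`,
which is the unique `w` with `t * w * t = t` and `w * t * w = w`. -/
def IsInvSemigroup (S : Type*) [Semigroup S] (sInv : S → S) : Prop :=
  (∀ t : S, t * sInv t * t = t) ∧ (∀ t : S, sInv t * t * sInv t = sInv t) ∧
    ∀ t w : S, t * w * t = t → w * t * w = w → w = sInv t

/-- An action of an inverse semigroup `S` (with generalized inverse `sInv`) on a
Banach algebra `A` by partial automorphisms `act t : I (sInv t) → I t` between
closed two-sided ideals, satisfying (PA1) and (PA2). -/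
structure InvSemigroupAction (S : Type*) [Semigroup S] (sInv : S → S)
    (A : Type*) [NonUnitalNormedRing A] [NormedSpace ℂ A] where
  /-- the ideals `I t` -/
  I : S → Submodule ℂ A
  /-- the partial automorphisms; only the values on `I (sInv t)` are relevant -/
  act : S → A → A
  ideal_closed : ∀ t, IsClosed (I t : Set A)
  ideal_mul_left : ∀ t (a : A), ∀ x ∈ I t, a * x ∈ I t
  ideal_mul_right : ∀ t (a : A), ∀ x ∈ I t, x * a ∈ I t
  act_mem : ∀ t, ∀ a ∈ I (sInv t), act t a ∈ I t
  act_surjOn : ∀ t, ∀ b ∈ I t, ∃ a ∈ I (sInv t), act t a = b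
  act_add : ∀ t, ∀ a ∈ I (sInv t), ∀ b ∈ I (sInv t), act t (a + b) = act t a + act t b
  act_smul : ∀ t (c : ℂ), ∀ a ∈ I (sInv t), act t (c • a) = c • act t a
  act_mul : ∀ t, ∀ a ∈ I (sInv t), ∀ b ∈ I (sInv t), act t (a * b) = act t a * act t b
  act_norm : ∀ t, ∀ a ∈ I (sInv t), ‖act t a‖ = ‖a‖
  /-- (PA1): `act s ∘ act t = act (s*t)` as partial maps: domains match ... -/
  comp_dom : ∀ s t (a : A), (a ∈ I (sInv t) ∧ act t a ∈ I (sInv s)) ↔ a ∈ I (sInv (s * t))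
  /-- (PA1): ... and values agree on the common domain. -/
  comp_act : ∀ s t, ∀ a ∈ I (sInv (s * t)), act s (act t a) = act (s * t) a
  /-- (PA2): each ideal has a contractive two-sided approximate unit (as a filter/net). -/
  approx_unit : ∀ t, ∃ l : Filter A, l.NeBot ∧ (∀ᶠ x in l, x ∈ I t ∧ ‖x‖ ≤ 1) ∧
    ∀ a ∈ I t, Tendsto (fun x => x * a) l (𝓝 a) ∧ Tendsto (fun x => a * x) l (𝓝 a)
  /-- (PA2): the union of the ideals over idempotents has dense linear span. -/
  dense_span : Dense (↑(Submodule.span ℂ (⋃ e ∈ {e : S | e * e = e}, (I e : Set A))) : Set A)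

/-- The convolution product on `ℓ¹(α)`:
`(f * g)(r) = ∑_{s t = r} α_s(α_{s*}(f s) · g t)`. -/
noncomputable def convVal {S : Type*} [Semigroup S] {sInv : S → S}
    {A : Type*} [NonUnitalNormedRing A] [NormedSpace ℂ A]
    (θ : InvSemigroupAction S sInv A) (f g : S → A) (r : S) : A :=
  ∑' p : {p : S × S // p.1 * p.2 = r},
    θ.act p.1.1 (θ.act (sInv p.1.1) (f p.1.1) * g p.1.2)

/-!
Each summand `α_s(α_{s*}(f s) g t)` is `α_s` applied to an element of `I_{s*} ∩ I_t`, and (PA1)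
identifies `α_s` there with `α_{st} ∘ α_t⁻¹`, which lands in `I_{st}`. Since the `α`'s are
isometric, the summand has norm at most `‖f s‖ ‖g t‖`, so the whole family on `S × S` is dominated
by the summable family `‖f s‖ ‖g t‖`; grouping it along the fibres of `(s, t) ↦ s t` gives the
convolution together with the `ℓ¹` bound.
-/

theorem IsInvSemigroup.sInv_sInv {S : Type*} [Semigroup S] {sInv : S → S}
    (hS : IsInvSemigroup S sInv) (t : S) : sInv (sInv t) = t :=
  (hS.2.2 (sInv t) t (hS.2.1 t) (hS.1 t)).symm

section Fiberwise

variable {β γ E : Type*} [SeminormedAddCommGroup E] {φ : β → E} {F : β → ℝ}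

theorem norm_tsum_fiber_le_tsum_fiber (hF : Summable F) (hφ : ∀ b, ‖φ b‖ ≤ F b)
    (m : β → γ) (c : γ) :
    ‖∑' b : {b // m b = c}, φ b‖ ≤ ∑' b : {b // m b = c}, F b :=
  tsum_of_norm_bounded (hF.subtype _).hasSum fun b => hφ b

theorem hasSum_tsum_fiber (hF : Summable F) (m : β → γ) :
    HasSum (fun c => ∑' b : {b // m b = c}, F b) (∑' b, F b) :=
  hF.hasSum.tsum_fiberwise m

theorem summable_norm_tsum_fiber (hF : Summable F) (hφ : ∀ b, ‖φ b‖ ≤ F b) (m : β → γ) :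
    Summable fun c => ‖∑' b : {b // m b = c}, φ b‖ :=
  (hasSum_tsum_fiber hF m).summable.of_nonneg_of_le (fun _ => norm_nonneg _)
    (norm_tsum_fiber_le_tsum_fiber hF hφ m)

theorem tsum_norm_tsum_fiber_le (hF : Summable F) (hφ : ∀ b, ‖φ b‖ ≤ F b) (m : β → γ) :
    ∑' c, ‖∑' b : {b // m b = c}, φ b‖ ≤ ∑' b, F b :=
  hasSum_le (norm_tsum_fiber_le_tsum_fiber hF hφ m) (summable_norm_tsum_fiber hF hφ m).hasSum
    (hasSum_tsum_fiber hF m)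

end Fiberwise

namespace InvSemigroupAction

variable {S A : Type*} [Semigroup S] [NonUnitalNormedRing A] [NormedSpace ℂ A] {sInv : S → S}
  (θ : InvSemigroupAction S sInv A)

theorem act_mem_mul {s t : S} {x : A} (hxs : x ∈ θ.I (sInv s)) (hxt : x ∈ θ.I t) :
    θ.act s x ∈ θ.I (s * t) := by
  obtain ⟨y, hy, rfl⟩ := θ.act_surjOn t x hxt
  have hy' : y ∈ θ.I (sInv (s * t)) := (θ.comp_dom s t y).1 ⟨hy, hxs⟩
  rw [θ.comp_act s t y hy']
  exact θ.act_mem _ y hy'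

theorem act_sInv_mem (hS : IsInvSemigroup S sInv) {s : S} {a : A} (ha : a ∈ θ.I s) :
    θ.act (sInv s) a ∈ θ.I (sInv s) :=
  θ.act_mem _ a (by rwa [hS.sInv_sInv])

theorem act_act_sInv_mul_mem (hS : IsInvSemigroup S sInv) {s t : S} {a b : A}
    (ha : a ∈ θ.I s) (hb : b ∈ θ.I t) :
    θ.act s (θ.act (sInv s) a * b) ∈ θ.I (s * t) :=
  θ.act_mem_mul (θ.ideal_mul_right _ b _ (θ.act_sInv_mem hS ha)) (θ.ideal_mul_left t _ b hb)

theorem norm_act_act_sInv_mul_le (hS : IsInvSemigroup S sInv) {s : S} {a : A}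
    (ha : a ∈ θ.I s) (b : A) :
    ‖θ.act s (θ.act (sInv s) a * b)‖ ≤ ‖a‖ * ‖b‖ := by
  rw [θ.act_norm s _ (θ.ideal_mul_right _ b _ (θ.act_sInv_mem hS ha))]
  calc ‖θ.act (sInv s) a * b‖ ≤ ‖θ.act (sInv s) a‖ * ‖b‖ := norm_mul_le _ _
    _ = ‖a‖ * ‖b‖ := by rw [θ.act_norm _ a (by rwa [hS.sInv_sInv])]

end InvSemigroupAction

theorem conv_well_defined_general
    {S A : Type*} [Semigroup S] [NonUnitalNormedRing A] [NormedSpace ℂ A]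
    (sInv : S → S) (hS : IsInvSemigroup S sInv)
    (θ : InvSemigroupAction S sInv A)
    (f g : S → A) (hf : ∀ t, f t ∈ θ.I t) (hg : ∀ t, g t ∈ θ.I t)
    (hf1 : Summable fun t => ‖f t‖) (hg1 : Summable fun t => ‖g t‖) :
    (∀ s t : S, θ.act s (θ.act (sInv s) (f s) * g t) ∈ θ.I (s * t)) ∧
    (∀ r : S,
      Summable (fun p : {p : S × S // p.1 * p.2 = r} =>
        ‖θ.act p.1.1 (θ.act (sInv p.1.1) (f p.1.1) * g p.1.2)‖) ∧
      convVal θ f g r ∈ θ.I r) ∧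
    (Summable fun r => ‖convVal θ f g r‖) ∧
    (∑' r, ‖convVal θ f g r‖) ≤ (∑' s, ‖f s‖) * ∑' t, ‖g t‖ := by
  have hmem : ∀ s t, θ.act s (θ.act (sInv s) (f s) * g t) ∈ θ.I (s * t) :=
    fun s t => θ.act_act_sInv_mul_mem hS (hf s) (hg t)
  have hle : ∀ p : S × S,
      ‖θ.act p.1 (θ.act (sInv p.1) (f p.1) * g p.2)‖ ≤ ‖f p.1‖ * ‖g p.2‖ :=
    fun p => θ.norm_act_act_sInv_mul_le hS (hf p.1) _
  have hF : Summable fun p : S × S => ‖f p.1‖ * ‖g p.2‖ :=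
    hf1.mul_of_nonneg hg1 (fun _ => norm_nonneg _) (fun _ => norm_nonneg _)
  refine ⟨hmem, fun r => ⟨?_, ?_⟩, summable_norm_tsum_fiber hF hle _, ?_⟩
  · exact (hF.subtype _).of_nonneg_of_le (fun _ => norm_nonneg _) fun p => hle p.1
  · exact tsum_mem (θ.ideal_closed r) fun ⟨⟨s, t⟩, hst⟩ => hst ▸ hmem s t
  · calc ∑' r, ‖convVal θ f g r‖ ≤ ∑' p : S × S, ‖f p.1‖ * ‖g p.2‖ :=
          tsum_norm_tsum_fiber_le hF hle _
      _ = (∑' s, ‖f s‖) * ∑' t, ‖g t‖ := (hf1.tsum_mul_tsum hg1 hF).symm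

/-- the convolution product on `ℓ¹(α)` is well defined:
each summand lies in `I (s*t)`, the defining families are absolutely summable,
`(f*g)(r) ∈ I r`, and `‖f*g‖₁ ≤ ‖f‖₁ ‖g‖₁`. -/
theorem conv_well_defined
    {S A : Type*} [Semigroup S] [NonUnitalNormedRing A] [NormedSpace ℂ A]
    [CompleteSpace A]
    (sInv : S → S) (hS : IsInvSemigroup S sInv)
    (θ : InvSemigroupAction S sInv A)
    (f g : S → A) (hf : ∀ t, f t ∈ θ.I t) (hg : ∀ t, g t ∈ θ.I t)
    (hf1 : Summable fun t => ‖f t‖) (hg1 : Summable fun t => ‖g t‖) :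
    (∀ s t : S, θ.act s (θ.act (sInv s) (f s) * g t) ∈ θ.I (s * t)) ∧
    (∀ r : S,
      Summable (fun p : {p : S × S // p.1 * p.2 = r} =>
        ‖θ.act p.1.1 (θ.act (sInv p.1.1) (f p.1.1) * g p.1.2)‖) ∧
      convVal θ f g r ∈ θ.I r) ∧
    (Summable fun r => ‖convVal θ f g r‖) ∧
    (∑' r, ‖convVal θ f g r‖) ≤ (∑' s, ‖f s‖) * ∑' t, ‖g t‖ :=
  conv_well_defined_general sInv hS θ f g hf hg hf1 hg1
end

section
/- Let α : S ↷ A be an inverse semigroup action on a Banach algebra A. Then the convolution product on ℓ¹(α), defined by (f*g)(r) := Σ_{st=r} α_s(α_{s*}(f(s)) g(t)), is associative: (f*g)*h = f*(g*h) for all f, g, h ∈ ℓ¹(α). (The proof uses that each ideal I_t has an approximate unit.) -/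
set_option autoImplicit false

open Filter Topology

/-!
The convolution is built from the twisted products `a ⋆ₛ b = α_s(α_{s*}(a) b)` of `a ∈ I_s`
and an arbitrary `b`. Composing the partial automorphisms gives
`(a ⋆ₛ b) ⋆ₛₜ c = α_s(α_{s*}(a) (b ⋆ₜ c))` for `b ∈ I_t`, and this equals `a ⋆ₛ (b ⋆ₜ c)` once
we know that `⋆ₜ` is left `A`-linear: `(d b) ⋆ₜ c = d (b ⋆ₜ c)`. For `d ∈ I_t` this is
multiplicativity of `α_t`, and for general `d` both sides lie in `I_t` and agree after left
multiplication by any element of `I_t`, so they are equal because `I_t` has an approximate unit.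
Finally, `‖a ⋆ₛ b‖ ≤ ‖a‖ ‖b‖`, so all the sums involved converge absolutely and both iterated
sums equal the same sum over triples `(s, t, u)` with `s t u = r`.
-/

namespace IsInvSemigroup

variable {S : Type*} [Semigroup S] {sInv : S → S}

theorem sInv_sInv_s5 (hS : IsInvSemigroup S sInv) (t : S) : sInv (sInv t) = t :=
  (hS.2.2 (sInv t) t (hS.2.1 t) (hS.1 t)).symm

theorem sInv_eq_self_of_isIdempotentElem (hS : IsInvSemigroup S sInv) {e : S}
    (he : IsIdempotentElem e) : sInv e = e :=
  (hS.2.2 e e (by rw [he.eq, he.eq]) (by rw [he.eq, he.eq])).symm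

theorem isIdempotentElem_sInv_mul_self (hS : IsInvSemigroup S sInv) (t : S) :
    IsIdempotentElem (sInv t * t) := by
  rw [IsIdempotentElem, ← mul_assoc, hS.2.1 t]

end IsInvSemigroup

namespace InvSemigroupAction

variable {S A : Type*} [Semigroup S] [NonUnitalNormedRing A] [NormedSpace ℂ A]
  {sInv : S → S} (hS : IsInvSemigroup S sInv) (θ : InvSemigroupAction S sInv A)

theorem eq_of_forall_mul_eq {t : S} {x y : A} (hx : x ∈ θ.I t) (hy : y ∈ θ.I t)
    (h : ∀ u ∈ θ.I t, u * x = u * y) : x = y := by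
  obtain ⟨l, _, hl, happrox⟩ := θ.approx_unit t
  refine tendsto_nhds_unique ((happrox x hx).1.congr' ?_) (happrox y hy).1
  filter_upwards [hl] with u hu using h u hu.1

theorem act_eq_self_of_isIdempotentElem {e : S} (he : IsIdempotentElem e) {a : A}
    (ha : a ∈ θ.I e) : θ.act e a = a := by
  obtain ⟨b, hb, rfl⟩ := θ.act_surjOn e a ha
  rw [θ.comp_act e e b (by rwa [he.eq]), he.eq]

/-- In `ℓ¹(α)`, `(a δ_s) * (b δ_t) = (twistedMul s a b) δ_{st}`. -/
noncomputable def twistedMul (s : S) (a b : A) : A :=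
  θ.act s (θ.act (sInv s) a * b)

include hS

theorem act_inv_mem {t : S} {a : A} (ha : a ∈ θ.I t) : θ.act (sInv t) a ∈ θ.I (sInv t) :=
  θ.act_mem _ a (by rwa [hS.sInv_sInv_s5])

theorem act_inv_act {t : S} {a : A} (ha : a ∈ θ.I (sInv t)) :
    θ.act (sInv t) (θ.act t a) = a := by
  have hdom : a ∈ θ.I (sInv (sInv t * t)) :=
    (θ.comp_dom (sInv t) t a).1 ⟨ha, by rw [hS.sInv_sInv_s5]; exact θ.act_mem t a ha⟩
  have he := hS.isIdempotentElem_sInv_mul_self t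
  rw [θ.comp_act _ _ a hdom, θ.act_eq_self_of_isIdempotentElem he]
  rwa [← hS.sInv_eq_self_of_isIdempotentElem he]

theorem act_act_inv {t : S} {a : A} (ha : a ∈ θ.I t) : θ.act t (θ.act (sInv t) a) = a := by
  simpa only [hS.sInv_sInv_s5] using θ.act_inv_act hS (t := sInv t) (by rwa [hS.sInv_sInv_s5])

theorem act_inv_mem_sInv_mul {s t : S} {x : A} (hs : x ∈ θ.I (sInv s)) (ht : x ∈ θ.I t) :
    θ.act (sInv t) x ∈ θ.I (sInv (s * t)) :=
  (θ.comp_dom s t _).1 ⟨θ.act_inv_mem hS ht, by rwa [θ.act_act_inv hS ht]⟩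

theorem act_mul_act_inv {s t : S} {x : A} (hs : x ∈ θ.I (sInv s)) (ht : x ∈ θ.I t) :
    θ.act (s * t) (θ.act (sInv t) x) = θ.act s x := by
  rw [← θ.comp_act s t _ (θ.act_inv_mem_sInv_mul hS hs ht), θ.act_act_inv hS ht]

theorem act_inv_mul_mem {s : S} {a : A} (ha : a ∈ θ.I s) (b : A) :
    θ.act (sInv s) a * b ∈ θ.I (sInv s) :=
  θ.ideal_mul_right _ b _ (θ.act_inv_mem hS ha)

theorem twistedMul_eq_act_mul {s t : S} {a b : A} (ha : a ∈ θ.I s) (hb : b ∈ θ.I t) :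
    θ.twistedMul s a b = θ.act (s * t) (θ.act (sInv t) (θ.act (sInv s) a * b)) :=
  (θ.act_mul_act_inv hS (θ.act_inv_mul_mem hS ha b) (θ.ideal_mul_left t _ b hb)).symm

theorem twistedMul_mem_self {s : S} {a : A} (ha : a ∈ θ.I s) (b : A) :
    θ.twistedMul s a b ∈ θ.I s :=
  θ.act_mem s _ (θ.act_inv_mul_mem hS ha b)

theorem twistedMul_mem {s t : S} {a b : A} (ha : a ∈ θ.I s) (hb : b ∈ θ.I t) :
    θ.twistedMul s a b ∈ θ.I (s * t) := by
  rw [θ.twistedMul_eq_act_mul hS ha hb]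
  exact θ.act_mem _ _ <|
    θ.act_inv_mem_sInv_mul hS (θ.act_inv_mul_mem hS ha b) (θ.ideal_mul_left t _ b hb)

theorem norm_twistedMul_le {s : S} {a : A} (ha : a ∈ θ.I s) (b : A) :
    ‖θ.twistedMul s a b‖ ≤ ‖a‖ * ‖b‖ := by
  rw [twistedMul, θ.act_norm s _ (θ.act_inv_mul_mem hS ha b)]
  calc ‖θ.act (sInv s) a * b‖ ≤ ‖θ.act (sInv s) a‖ * ‖b‖ := norm_mul_le _ _
    _ = ‖a‖ * ‖b‖ := by rw [θ.act_norm _ a (by rwa [hS.sInv_sInv_s5])]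

theorem twistedMul_add_left {s : S} {a a' : A} (ha : a ∈ θ.I s) (ha' : a' ∈ θ.I s) (b : A) :
    θ.twistedMul s (a + a') b = θ.twistedMul s a b + θ.twistedMul s a' b := by
  rw [twistedMul, θ.act_add _ a (by rwa [hS.sInv_sInv_s5]) a' (by rwa [hS.sInv_sInv_s5]), add_mul,
    θ.act_add s _ (θ.act_inv_mul_mem hS ha b) _ (θ.act_inv_mul_mem hS ha' b)]
  rfl

theorem twistedMul_add_right {s : S} {a : A} (ha : a ∈ θ.I s) (b b' : A) :
    θ.twistedMul s a (b + b') = θ.twistedMul s a b + θ.twistedMul s a b' := by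
  rw [twistedMul, mul_add,
    θ.act_add s _ (θ.act_inv_mul_mem hS ha b) _ (θ.act_inv_mul_mem hS ha b')]
  rfl

theorem twistedMul_mul_left_of_mem {t : S} {d b : A} (hd : d ∈ θ.I t) (hb : b ∈ θ.I t) (c : A) :
    θ.twistedMul t (d * b) c = d * θ.twistedMul t b c := by
  have hd' := θ.act_inv_mem hS hd
  rw [twistedMul, θ.act_mul _ d (by rwa [hS.sInv_sInv_s5]) b (by rwa [hS.sInv_sInv_s5]), mul_assoc,
    θ.act_mul t _ hd' _ (θ.act_inv_mul_mem hS hb c), θ.act_act_inv hS hd]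
  rfl

theorem twistedMul_mul_left {t : S} (d : A) {b : A} (hb : b ∈ θ.I t) (c : A) :
    θ.twistedMul t (d * b) c = d * θ.twistedMul t b c := by
  have hdb : d * b ∈ θ.I t := θ.ideal_mul_left t d b hb
  refine θ.eq_of_forall_mul_eq (θ.twistedMul_mem_self hS hdb c)
    (θ.ideal_mul_left t d _ (θ.twistedMul_mem_self hS hb c)) fun u hu => ?_
  rw [← θ.twistedMul_mul_left_of_mem hS hu hdb, ← mul_assoc,
    θ.twistedMul_mul_left_of_mem hS (θ.ideal_mul_right t d u hu) hb, mul_assoc]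

theorem twistedMul_assoc {s t : S} {a b : A} (ha : a ∈ θ.I s) (hb : b ∈ θ.I t) (c : A) :
    θ.twistedMul (s * t) (θ.twistedMul s a b) c = θ.twistedMul s a (θ.twistedMul t b c) := by
  have hx := θ.act_inv_mul_mem hS ha b
  have hxt : θ.act (sInv s) a * b ∈ θ.I t := θ.ideal_mul_left t _ b hb
  have hy := θ.act_inv_mem_sInv_mul hS hx hxt
  calc θ.twistedMul (s * t) (θ.twistedMul s a b) c
      = θ.act (s * t) (θ.act (sInv t) (θ.act (sInv s) a * b) * c) := by
        rw [θ.twistedMul_eq_act_mul hS ha hb, twistedMul, θ.act_inv_act hS hy]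
    _ = θ.act s (θ.twistedMul t (θ.act (sInv s) a * b) c) :=
        (θ.comp_act s t _ (θ.ideal_mul_right _ c _ hy)).symm
    _ = θ.twistedMul s a (θ.twistedMul t b c) := by
        rw [θ.twistedMul_mul_left hS _ hb]
        rfl

theorem hasSum_twistedMul_left {ι : Type*} {s : S} {x : ι → A} (hx : ∀ i, x i ∈ θ.I s) {a : A}
    (h : HasSum x a) (c : A) : HasSum (fun i => θ.twistedMul s (x i) c) (θ.twistedMul s a c) := by
  have ha : a ∈ θ.I s := h.tsum_eq ▸ tsum_mem (θ.ideal_closed s) hx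
  have hlift : HasSum (fun i => (⟨x i, hx i⟩ : θ.I s)) ⟨a, ha⟩ :=
    (Topology.IsInducing.subtypeVal.hasSum_iff (g := (θ.I s).subtype) _ _).1 h
  exact hlift.map
    (AddMonoidHom.mk' (fun a : θ.I s => θ.twistedMul s a c) fun a a' =>
      θ.twistedMul_add_left hS a.2 a'.2 c)
    (AddMonoidHomClass.continuous_of_bound _ ‖c‖ fun a =>
      (θ.norm_twistedMul_le hS a.2 c).trans_eq (mul_comm _ _))

theorem hasSum_twistedMul_right {ι : Type*} {s : S} {a : A} (ha : a ∈ θ.I s) {x : ι → A} {b : A}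
    (h : HasSum x b) : HasSum (fun i => θ.twistedMul s a (x i)) (θ.twistedMul s a b) :=
  h.map (AddMonoidHom.mk' (θ.twistedMul s a) (θ.twistedMul_add_right hS ha))
    (AddMonoidHomClass.continuous_of_bound _ ‖a‖ (θ.norm_twistedMul_le hS ha))

end InvSemigroupAction

section Convolution

variable {S : Type*} [Semigroup S]

abbrev Factorization (r : S) := {p : S × S // p.1 * p.2 = r}

abbrev Factorization₃ (r : S) := {w : (S × S) × S // w.1.1 * w.1.2 * w.2 = r}

def tripleEquivSigmaLeft (r : S) :
    Factorization₃ r ≃ Σ q : Factorization r, Factorization q.1.1 where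
  toFun w := ⟨⟨(w.1.1.1 * w.1.1.2, w.1.2), w.2⟩, ⟨w.1.1, rfl⟩⟩
  invFun σ := ⟨(σ.2.1, σ.1.1.2), by rw [σ.2.2]; exact σ.1.2⟩
  left_inv _ := rfl
  right_inv := by
    rintro ⟨⟨⟨q₁, q₂⟩, hq⟩, ⟨⟨p₁, p₂⟩, rfl : p₁ * p₂ = q₁⟩⟩
    rfl

def tripleEquivSigmaRight (r : S) :
    Factorization₃ r ≃ Σ q : Factorization r, Factorization q.1.2 where
  toFun w :=
    ⟨⟨(w.1.1.1, w.1.1.2 * w.1.2), by rw [← mul_assoc]; exact w.2⟩, ⟨(w.1.1.2, w.1.2), rfl⟩⟩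
  invFun σ := ⟨((σ.1.1.1, σ.2.1.1), σ.2.1.2), by rw [mul_assoc, σ.2.2]; exact σ.1.2⟩
  left_inv _ := rfl
  right_inv := by
    rintro ⟨⟨⟨q₁, q₂⟩, hq⟩, ⟨⟨p₁, p₂⟩, rfl : p₁ * p₂ = q₂⟩⟩
    rfl

theorem summable_norm_mul_norm_mul_norm {E : Type*} [SeminormedAddGroup E] {f g h : S → E}
    (hf : Summable fun t => ‖f t‖) (hg : Summable fun t => ‖g t‖)
    (hh : Summable fun t => ‖h t‖) (r : S) :
    Summable fun w : Factorization₃ r => ‖f w.1.1.1‖ * ‖g w.1.1.2‖ * ‖h w.1.2‖ :=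
  ((hf.mul_of_nonneg hg (fun _ => norm_nonneg _) fun _ => norm_nonneg _).mul_of_nonneg hh
    (fun _ => by positivity) fun _ => norm_nonneg _).subtype _

variable {A : Type*} [NonUnitalNormedRing A] [NormedSpace ℂ A] [CompleteSpace A]
  {sInv : S → S} (hS : IsInvSemigroup S sInv) (θ : InvSemigroupAction S sInv A) {f g h : S → A}

include hS

theorem hasSum_convVal (hf : ∀ t, f t ∈ θ.I t) (hf1 : Summable fun t => ‖f t‖)
    (hg1 : Summable fun t => ‖g t‖) (r : S) :
    HasSum (fun p : Factorization r => θ.twistedMul p.1.1 (f p.1.1) (g p.1.2))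
      (convVal θ f g r) :=
  (Summable.of_norm_bounded
    ((hf1.mul_of_nonneg hg1 (fun _ => norm_nonneg _) fun _ => norm_nonneg _).subtype _)
    fun _ => θ.norm_twistedMul_le hS (hf _) _).hasSum

theorem convVal_convVal_left_eq_tsum (hf : ∀ t, f t ∈ θ.I t) (hg : ∀ t, g t ∈ θ.I t)
    (hf1 : Summable fun t => ‖f t‖) (hg1 : Summable fun t => ‖g t‖)
    (hh1 : Summable fun t => ‖h t‖) (r : S) :
    convVal θ (convVal θ f g) h r = ∑' w : Factorization₃ r, θ.twistedMul (w.1.1.1 * w.1.1.2)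
      (θ.twistedMul w.1.1.1 (f w.1.1.1) (g w.1.1.2)) (h w.1.2) := by
  have hsum := Summable.of_norm_bounded (summable_norm_mul_norm_mul_norm hf1 hg1 hh1 r) fun w =>
    (θ.norm_twistedMul_le hS (θ.twistedMul_mem hS (hf _) (hg _)) _).trans <|
      mul_le_mul_of_nonneg_right (θ.norm_twistedMul_le hS (hf _) _) (norm_nonneg _)
  have hsigma := (tripleEquivSigmaLeft r).hasSum_iff
    (f := fun σ : Σ q : Factorization r, Factorization q.1.1 =>
      θ.twistedMul σ.1.1.1 (θ.twistedMul σ.2.1.1 (f σ.2.1.1) (g σ.2.1.2)) (h σ.1.1.2))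
    |>.1 hsum.hasSum
  refine (hsigma.sigma (g := fun q : Factorization r =>
    θ.twistedMul q.1.1 (convVal θ f g q.1.1) (h q.1.2)) fun q =>
      θ.hasSum_twistedMul_left hS (fun p => ?_) (hasSum_convVal hS θ hf hf1 hg1 q.1.1) _).tsum_eq
  simpa only [p.2] using θ.twistedMul_mem hS (hf p.1.1) (hg p.1.2)

theorem convVal_convVal_right_eq_tsum (hf : ∀ t, f t ∈ θ.I t) (hg : ∀ t, g t ∈ θ.I t)
    (hf1 : Summable fun t => ‖f t‖) (hg1 : Summable fun t => ‖g t‖)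
    (hh1 : Summable fun t => ‖h t‖) (r : S) :
    convVal θ f (convVal θ g h) r = ∑' w : Factorization₃ r,
      θ.twistedMul w.1.1.1 (f w.1.1.1) (θ.twistedMul w.1.1.2 (g w.1.1.2) (h w.1.2)) := by
  have hsum := Summable.of_norm_bounded (summable_norm_mul_norm_mul_norm hf1 hg1 hh1 r) fun w =>
    (θ.norm_twistedMul_le hS (hf _) _).trans <| by
      rw [mul_assoc]
      exact mul_le_mul_of_nonneg_left (θ.norm_twistedMul_le hS (hg _) _) (norm_nonneg _)
  have hsigma := (tripleEquivSigmaRight r).hasSum_iff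
    (f := fun σ : Σ q : Factorization r, Factorization q.1.2 =>
      θ.twistedMul σ.1.1.1 (f σ.1.1.1) (θ.twistedMul σ.2.1.1 (g σ.2.1.1) (h σ.2.1.2)))
    |>.1 hsum.hasSum
  exact (hsigma.sigma (g := fun q : Factorization r =>
    θ.twistedMul q.1.1 (f q.1.1) (convVal θ g h q.1.2)) fun q =>
      θ.hasSum_twistedMul_right hS (hf _) (hasSum_convVal hS θ hg hg1 hh1 q.1.2)).tsum_eq

end Convolution

theorem conv_assoc_general
    {S A : Type*} [Semigroup S] [NonUnitalNormedRing A] [NormedSpace ℂ A]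
    [CompleteSpace A]
    (sInv : S → S) (hS : IsInvSemigroup S sInv)
    (θ : InvSemigroupAction S sInv A)
    (f g h : S → A)
    (hf : ∀ t, f t ∈ θ.I t) (hg : ∀ t, g t ∈ θ.I t)
    (hf1 : Summable fun t => ‖f t‖) (hg1 : Summable fun t => ‖g t‖)
    (hh1 : Summable fun t => ‖h t‖) :
    ∀ r : S, convVal θ (convVal θ f g) h r = convVal θ f (convVal θ g h) r := by
  intro r
  rw [convVal_convVal_left_eq_tsum hS θ hf hg hf1 hg1 hh1,
    convVal_convVal_right_eq_tsum hS θ hf hg hf1 hg1 hh1]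
  exact tsum_congr fun w => θ.twistedMul_assoc hS (hf _) (hg _) _

/-- the convolution product on `ℓ¹(α)` is associative. -/
theorem conv_assoc
    {S A : Type*} [Semigroup S] [NonUnitalNormedRing A] [NormedSpace ℂ A]
    [CompleteSpace A]
    (sInv : S → S) (hS : IsInvSemigroup S sInv)
    (θ : InvSemigroupAction S sInv A)
    (f g h : S → A)
    (hf : ∀ t, f t ∈ θ.I t) (hg : ∀ t, g t ∈ θ.I t) (hh : ∀ t, h t ∈ θ.I t)
    (hf1 : Summable fun t => ‖f t‖) (hg1 : Summable fun t => ‖g t‖)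
    (hh1 : Summable fun t => ‖h t‖) :
    ∀ r : S, convVal θ (convVal θ f g) h r = convVal θ f (convVal θ g h) r :=
  conv_assoc_general sInv hS θ f g h hf hg hf1 hg1 hh1
end

section
/- Let (π, v) be a covariant representation of an inverse semigroup action α : S ↷ A on a Banach space E. Then for all s, t ∈ S and all a_s ∈ I_s, a_t ∈ I_t: the element α_s(α_{s*}(a_s) a_t) lies in I_{st}, and (π(a_s) v_s)(π(a_t) v_t) = π(α_s(α_{s*}(a_s) a_t)) v_{st}. Consequently, setting A_t := { π(a) v_t : a ∈ I_t }, one has A_s A_t ⊆ A_{st}. -/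
set_option autoImplicit false

open Filter Topology

/-- A covariant representation of an inverse semigroup action on a Banach space `E`:
`π` is a contractive algebra homomorphism `A → B(E)`, `v` is a contractive semigroup
homomorphism satisfying (SCR1) and (SCR2). -/
structure IsCovariantRep {S : Type*} [Semigroup S] {sInv : S → S}
    {A : Type*} [NonUnitalNormedRing A] [NormedSpace ℂ A]
    {E : Type*} [NormedAddCommGroup E] [NormedSpace ℂ E]
    (θ : InvSemigroupAction S sInv A)
    (π : A → E →L[ℂ] E) (v : S → E →L[ℂ] E) : Prop where
  π_norm : ∀ a, ‖π a‖ ≤ ‖a‖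
  π_add : ∀ a b, π (a + b) = π a + π b
  π_smul : ∀ (c : ℂ) (a : A), π (c • a) = c • π a
  π_mul : ∀ a b, π (a * b) = π a * π b
  v_norm : ∀ t, ‖v t‖ ≤ 1
  v_mul : ∀ s t, v (s * t) = v s * v t
  scr1 : ∀ t, ∀ a ∈ θ.I (sInv t), v t * π a = π (θ.act t a) * v t
  scr2 : ∀ t, Set.range (v t) =
    closure (↑(Submodule.span ℂ {x : E | ∃ a ∈ θ.I t, ∃ ξ : E, π a ξ = x}) : Set E)

/-- multiplication rule for a covariant representation `(π, v)` on `E`: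
`(π(a_s) v_s)(π(a_t) v_t) = π(α_s(α_{s*}(a_s) a_t)) v_{st}` with
`α_s(α_{s*}(a_s) a_t) ∈ I_{st}`; hence `A_s A_t ⊆ A_{st}` for
`A_t = { π(a) v_t : a ∈ I_t }`. -/
theorem covariantRep_grading_mul
    {S A E : Type*} [Semigroup S] [NonUnitalNormedRing A] [NormedSpace ℂ A]
    [NormedAddCommGroup E] [NormedSpace ℂ E]
    (sInv : S → S) (hS : IsInvSemigroup S sInv)
    (θ : InvSemigroupAction S sInv A)
    (π : A → E →L[ℂ] E) (v : S → E →L[ℂ] E)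
    (hcov : IsCovariantRep θ π v) :
    (∀ s t : S, ∀ as ∈ θ.I s, ∀ at' ∈ θ.I t,
      θ.act s (θ.act (sInv s) as * at') ∈ θ.I (s * t) ∧
      (π as * v s) * (π at' * v t) = π (θ.act s (θ.act (sInv s) as * at')) * v (s * t)) ∧
    (∀ s t : S, ∀ x ∈ {y : E →L[ℂ] E | ∃ a ∈ θ.I s, π a * v s = y},
      ∀ y ∈ {y : E →L[ℂ] E | ∃ a ∈ θ.I t, π a * v t = y},
        x * y ∈ {z : E →L[ℂ] E | ∃ a ∈ θ.I (s * t), π a * v (s * t) = z}) := by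

  have hinv2 : ∀ u : S, sInv (sInv u) = u :=
    fun u => (hS.2.2 (sInv u) u (hS.2.1 u) (hS.1 u)).symm
  have hidem_inv : ∀ e : S, e * e = e → sInv e = e := fun e he =>
    (hS.2.2 e e (by rw [he, he]) (by rw [he, he])).symm
  -- injectivity of act t on I (sInv t)
  have hsub : ∀ t : S, ∀ a ∈ θ.I (sInv t), ∀ b ∈ θ.I (sInv t),
      θ.act t (a - b) = θ.act t a - θ.act t b := by
    intro t a ha b hb
    have hnb : -b ∈ θ.I (sInv t) := (θ.I (sInv t)).neg_mem hb
    have : θ.act t (-b) = -θ.act t b := by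
      have := θ.act_smul t (-1 : ℂ) b hb
      simpa using this
    rw [sub_eq_add_neg, θ.act_add t a ha (-b) hnb, this, ← sub_eq_add_neg]
  have hinj : ∀ t : S, ∀ a ∈ θ.I (sInv t), ∀ b ∈ θ.I (sInv t),
      θ.act t a = θ.act t b → a = b := by
    intro t a ha b hb h
    have hab : a - b ∈ θ.I (sInv t) := (θ.I (sInv t)).sub_mem ha hb
    have := θ.act_norm t (a - b) hab
    rw [hsub t a ha b hb, h, sub_self, norm_zero] at this
    exact sub_eq_zero.mp (norm_eq_zero.mp this.symm)
  -- fixed point property for idempotents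
  have hfix : ∀ e : S, e * e = e → ∀ x ∈ θ.I e, θ.act e x = x := by
    intro e he x hx
    have hie : sInv e = e := hidem_inv e he
    have hx' : x ∈ θ.I (sInv e) := by rw [hie]; exact hx
    have hax : θ.act e x ∈ θ.I (sInv e) := by rw [hie]; exact θ.act_mem e x hx'
    have hx'' : x ∈ θ.I (sInv (e * e)) := by rw [he]; exact hx'
    have h1 : θ.act e (θ.act e x) = θ.act (e * e) x := θ.comp_act e e x hx''
    rw [he] at h1
    exact hinj e (θ.act e x) hax x hx' h1
  have main : ∀ s t : S, ∀ as ∈ θ.I s, ∀ at' ∈ θ.I t,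
      θ.act s (θ.act (sInv s) as * at') ∈ θ.I (s * t) ∧
      (π as * v s) * (π at' * v t) = π (θ.act s (θ.act (sInv s) as * at')) * v (s * t) := by
    intro s t as has at' hat
    have has' : as ∈ θ.I (sInv (sInv s)) := by rw [hinv2]; exact has
    set b := θ.act (sInv s) as with hbdef
    have hb : b ∈ θ.I (sInv s) := θ.act_mem (sInv s) as has'
    set x := b * at' with hxdef
    have hx1 : x ∈ θ.I (sInv s) := θ.ideal_mul_right (sInv s) at' b hb
    have hx2 : x ∈ θ.I t := θ.ideal_mul_left t b at' hat
    -- act s b = as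
    have hfidem : (s * sInv s) * (s * sInv s) = s * sInv s := by
      have := hS.1 s
      calc (s * sInv s) * (s * sInv s) = (s * sInv s * s) * sInv s := by
            rw [mul_assoc, mul_assoc, mul_assoc]
        _ = s * sInv s := by rw [this]
    have has_f : as ∈ θ.I (sInv (s * sInv s)) := (θ.comp_dom s (sInv s) as).mp ⟨has', hb⟩
    have has_f' : as ∈ θ.I (s * sInv s) := by
      rw [hidem_inv _ hfidem] at has_f; exact has_f
    have hactb : θ.act s b = as := by
      have h1 : θ.act s (θ.act (sInv s) as) = θ.act (s * sInv s) as :=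
        θ.comp_act s (sInv s) as has_f
      rw [← hbdef] at h1
      rw [h1, hfix _ hfidem as has_f']
    -- a := act (sInv t) x, act t a = x
    have hx2' : x ∈ θ.I (sInv (sInv t)) := by rw [hinv2]; exact hx2
    set a := θ.act (sInv t) x with hadef
    have ha : a ∈ θ.I (sInv t) := θ.act_mem (sInv t) x hx2'
    have heidem : (t * sInv t) * (t * sInv t) = t * sInv t := by
      have := hS.1 t
      calc (t * sInv t) * (t * sInv t) = (t * sInv t * t) * sInv t := by
            rw [mul_assoc, mul_assoc, mul_assoc]
        _ = t * sInv t := by rw [this]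
    have hx_e : x ∈ θ.I (sInv (t * sInv t)) := (θ.comp_dom t (sInv t) x).mp ⟨hx2', ha⟩
    have hx_e' : x ∈ θ.I (t * sInv t) := by rw [hidem_inv _ heidem] at hx_e; exact hx_e
    have hacta : θ.act t a = x := by
      have h1 : θ.act t (θ.act (sInv t) x) = θ.act (t * sInv t) x :=
        θ.comp_act t (sInv t) x hx_e
      rw [← hadef] at h1
      rw [h1, hfix _ heidem x hx_e']
    have ha' : a ∈ θ.I (sInv (s * t)) :=
      (θ.comp_dom s t a).mp ⟨ha, by rw [hacta]; exact hx1⟩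
    have hkey : θ.act s x = θ.act (s * t) a := by
      have := θ.comp_act s t a ha'
      rw [hacta] at this; exact this
    constructor
    · rw [hkey]; exact θ.act_mem (s * t) a ha'
    · have h1 : π as * v s = v s * π b := by
        rw [← hactb]; exact (hcov.scr1 s b hb).symm
      have h2 : v s * π x = π (θ.act s x) * v s := hcov.scr1 s x hx1
      have h3 : π b * π at' = π x := (hcov.π_mul b at').symm
      rw [h1, hcov.v_mul s t]
      calc v s * π b * (π at' * v t) = v s * (π b * π at') * v t := by
            rw [mul_assoc, mul_assoc, mul_assoc]
        _ = v s * π x * v t := by rw [h3]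
        _ = (π (θ.act s x) * v s) * v t := by rw [h2]
        _ = π (θ.act s x) * (v s * v t) := by rw [mul_assoc]
  refine ⟨main, ?_⟩
  rintro s t x ⟨a, ha, rfl⟩ y ⟨b, hb, rfl⟩
  exact ⟨_, (main s t a ha b hb).1, ((main s t a ha b hb).2).symm⟩
end

section
/- Let (π, v) be a covariant representation of an inverse semigroup action α : S ↷ A on a Banach space E. If s ≤ t in S (i.e. s = t s* s), then I_s ⊆ I_t and π(a) v_s = π(a) v_t for all a ∈ I_s. Consequently, setting A_t := { π(a) v_t : a ∈ I_t }, one has A_s ⊆ A_t whenever s ≤ t. -/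
set_option autoImplicit false

open Filter Topology

section Semi
variable {S : Type*} [Semigroup S] {sInv : S → S}

lemma sInv_idem (hS : IsInvSemigroup S sInv) {e : S} (he : e * e = e) : sInv e = e :=
  (hS.2.2 e e (by rw [he, he]) (by rw [he, he])).symm

lemma idem_mul_self_right (hS : IsInvSemigroup S sInv) (b : S) :
    (b * sInv b) * (b * sInv b) = b * sInv b := by
  rw [← mul_assoc, hS.1]

lemma idem_mul_self_left (hS : IsInvSemigroup S sInv) (a : S) :
    (sInv a * a) * (sInv a * a) = sInv a * a := by
  rw [show (sInv a * a) * (sInv a * a) = (sInv a * a * sInv a) * a from by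
    simp only [mul_assoc], hS.2.1]

/-- product of idempotents is a self-inverse idempotent -/
lemma idem_mul (hS : IsInvSemigroup S sInv) {e f : S} (he : e * e = e) (hf : f * f = f) :
    (e * f) * (e * f) = e * f ∧ sInv (e * f) = e * f := by
  have he2 : ∀ y : S, e * (e * y) = e * y := fun y => by rw [← mul_assoc, he]
  have hf2 : ∀ y : S, f * (f * y) = f * y := fun y => by rw [← mul_assoc, hf]
  set x := sInv (e * f) with hx
  have hx1 : (e * f) * x * (e * f) = e * f := hS.1 (e * f)
  have hx2 : x * (e * f) * x = x := hS.2.1 (e * f)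
  have hx1' : e * (f * (x * (e * f))) = e * f := by simpa [mul_assoc] using hx1
  have A : (e * f) * (f * x * e) * (e * f) = e * f := by
    simp only [mul_assoc]
    rw [hf2, he2]
    simpa [mul_assoc] using hx1
  have B : (f * x * e) * (e * f) * (f * x * e) = f * x * e := by
    have h : (f * x * e) * (e * f) * (f * x * e) = f * ((x * (e * f)) * x) * e := by
      simp only [mul_assoc]
      rw [he2, hf2]
    rw [h, hx2]
  have hfxe : f * x * e = x := hS.2.2 (e * f) (f * x * e) A B
  have hxx : x * x = x := by
    rw [← hfxe]
    have h : (f * x * e) * (f * x * e) = f * ((x * (e * f)) * x) * e := by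
      simp only [mul_assoc]
    rw [h, hx2]
  have hef : e * f = x := by
    have := hS.2.2 x (e * f) hx2 hx1
    rwa [sInv_idem hS hxx] at this
  constructor
  · rw [hef]; exact hxx
  · exact hef.symm

lemma idem_comm (hS : IsInvSemigroup S sInv) {e f : S} (he : e * e = e) (hf : f * f = f) :
    e * f = f * e := by
  have he2 : ∀ y : S, e * (e * y) = e * y := fun y => by rw [← mul_assoc, he]
  have hf2 : ∀ y : S, f * (f * y) = f * y := fun y => by rw [← mul_assoc, hf]
  obtain ⟨hef_idem, hef_inv⟩ := idem_mul hS he hf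
  obtain ⟨hfe_idem, hfe_inv⟩ := idem_mul hS hf he
  have A : (e * f) * (f * e) * (e * f) = e * f := by
    simp only [mul_assoc]
    rw [hf2, he2]
    simpa [mul_assoc] using hef_idem
  have B : (f * e) * (e * f) * (f * e) = f * e := by
    simp only [mul_assoc]
    rw [he2, hf2]
    simpa [mul_assoc] using hfe_idem
  have := hS.2.2 (e * f) (f * e) A B
  rw [hef_inv] at this
  exact this.symm

lemma sInv_mul (hS : IsInvSemigroup S sInv) (a b : S) :
    sInv (a * b) = sInv b * sInv a := by
  have hp := idem_mul_self_right hS b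
  have hq := idem_mul_self_left hS a
  have key : (b * sInv b) * (sInv a * a) = (sInv a * a) * (b * sInv b) :=
    idem_comm hS hp hq
  have H1 : (a * b) * (sInv b * sInv a) * (a * b) = a * b := by
    calc (a * b) * (sInv b * sInv a) * (a * b)
        = a * ((b * sInv b) * (sInv a * a)) * b := by simp only [mul_assoc]
      _ = a * ((sInv a * a) * (b * sInv b)) * b := by rw [key]
      _ = (a * sInv a * a) * ((b * sInv b) * b) := by simp only [mul_assoc]
      _ = a * b := by rw [hS.1, hS.1]
  have H2 : (sInv b * sInv a) * (a * b) * (sInv b * sInv a) = sInv b * sInv a := by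
    calc (sInv b * sInv a) * (a * b) * (sInv b * sInv a)
        = sInv b * ((sInv a * a) * (b * sInv b)) * sInv a := by simp only [mul_assoc]
      _ = sInv b * ((b * sInv b) * (sInv a * a)) * sInv a := by rw [← key]
      _ = (sInv b * b * sInv b) * ((sInv a * a) * sInv a) := by simp only [mul_assoc]
      _ = sInv b * sInv a := by rw [hS.2.1, hS.2.1]
  exact (hS.2.2 (a * b) (sInv b * sInv a) H1 H2).symm

lemma flip_aux (hS : IsInvSemigroup S sInv) {s t e : S} (hee : e * e = e)
    (hse : s = t * e) (hU : sInv s = e * sInv t) : s * sInv s * t = s := by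
  have hq := idem_mul_self_left hS t
  rw [hU, hse]
  calc (t * e) * (e * sInv t) * t
      = t * ((e * e) * (sInv t * t)) := by simp only [mul_assoc]
    _ = t * (e * (sInv t * t)) := by rw [hee]
    _ = t * ((sInv t * t) * e) := by rw [idem_comm hS hee hq]
    _ = (t * sInv t * t) * e := by simp only [mul_assoc]
    _ = t * e := by rw [hS.1]

lemma le_flip (hS : IsInvSemigroup S sInv) {s t : S} (h : s = t * sInv s * s) :
    s * sInv s * t = s := by
  have he := idem_mul_self_left hS s
  have hse : s = t * (sInv s * s) := by rw [← mul_assoc]; exact h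
  have hU : sInv s = (sInv s * s) * sInv t := by
    have h2 : sInv s = sInv (t * (sInv s * s)) := congrArg sInv hse
    rwa [sInv_mul hS, sInv_idem hS he] at h2
  exact flip_aux hS he hse hU

end Semi

section Ops
set_option linter.unusedSectionVars false
variable {S A E : Type*} [Semigroup S] [NonUnitalNormedRing A] [NormedSpace ℂ A]
    [NormedAddCommGroup E] [NormedSpace ℂ E] {sInv : S → S}
    (hS : IsInvSemigroup S sInv) (θ : InvSemigroupAction S sInv A)

include hS

/-- `I s ⊆ I (s s*)` -/
lemma I_le_I_range (s : S) : θ.I s ≤ θ.I (s * sInv s) := by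
  intro b hb
  obtain ⟨a, ha, rfl⟩ := θ.act_surjOn s b hb
  have hmem : a ∈ θ.I (sInv (s * sInv s * s)) := by rw [hS.1]; exact ha
  have h2 := ((θ.comp_dom (s * sInv s) s a).mpr hmem).2
  rwa [sInv_idem hS (idem_mul_self_right hS s)] at h2

/-- if `s = t e` with `e = s* s` then `I s ⊆ I t` -/
lemma I_mono (s t : S) (hse : s = t * (sInv s * s)) : θ.I s ≤ θ.I t := by
  intro b hb
  obtain ⟨a, ha, rfl⟩ := θ.act_surjOn s b hb
  have hmem : a ∈ θ.I (sInv (t * (sInv s * s))) := by rw [← hse]; exact ha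
  have h2 := ((θ.comp_dom t (sInv s * s) a).mpr hmem).2
  have h3 := θ.act_mem t _ h2
  rw [θ.comp_act t (sInv s * s) a hmem, ← hse] at h3
  exact h3

/-- `act f = id` on `I f` for idempotent `f` -/
lemma act_idem_fix {f : S} (hff : f * f = f) {b : A} (hb : b ∈ θ.I f) :
    θ.act f b = b := by
  have hf' : sInv f = f := sInv_idem hS hff
  obtain ⟨a, ha, rfl⟩ := θ.act_surjOn f b hb
  have hmem : a ∈ θ.I (sInv (f * f)) := by rw [hff]; exact ha
  have := θ.comp_act f f a hmem
  rwa [hff] at this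

variable {π : A → E →L[ℂ] E} {v : S → E →L[ℂ] E} (hcov : IsCovariantRep θ π v)

include hcov

/-- `v f π(b) = π(b)` for `b ∈ I f`, `f` idempotent -/
lemma v_idem_pi {f : S} (hff : f * f = f) {b : A} (hb : b ∈ θ.I f) :
    v f * π b = π b := by
  ext ξ
  have hmem : (π b) ξ ∈ Set.range (v f) := by
    rw [hcov.scr2 f]
    exact subset_closure (Submodule.subset_span ⟨b, hb, ξ, rfl⟩)
  obtain ⟨η, hη⟩ := hmem
  have hvv : v f * v f = v f := by
    have := hcov.v_mul f f
    rw [hff] at this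
    exact this.symm
  calc (v f * π b) ξ = v f ((π b) ξ) := rfl
    _ = v f (v f η) := by rw [hη]
    _ = (v f * v f) η := rfl
    _ = v f η := by rw [hvv]
    _ = (π b) ξ := hη

/-- `π(b) v f = π(b)` for `b ∈ I f`, `f` idempotent -/
lemma pi_idem_v {f : S} (hff : f * f = f) {b : A} (hb : b ∈ θ.I f) :
    π b * v f = π b := by
  have h1 := hcov.scr1 f b (by rwa [sInv_idem hS hff])
  rw [act_idem_fix hS θ hff hb] at h1
  exact h1.symm.trans (v_idem_pi hS θ hcov hff hb)

end Ops

/-- for a covariant representation `(π, v)` on `E`, if `s ≤ t`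
(i.e. `s = t s* s`) then `I_s ⊆ I_t`, `π(a) v_s = π(a) v_t` for `a ∈ I_s`, and
consequently `A_s ⊆ A_t` for `A_t = { π(a) v_t : a ∈ I_t }`. -/
theorem covariantRep_grading_mono
    {S A E : Type*} [Semigroup S] [NonUnitalNormedRing A] [NormedSpace ℂ A]
    [NormedAddCommGroup E] [NormedSpace ℂ E]
    (sInv : S → S) (hS : IsInvSemigroup S sInv)
    (θ : InvSemigroupAction S sInv A)
    (π : A → E →L[ℂ] E) (v : S → E →L[ℂ] E)
    (hcov : IsCovariantRep θ π v) :
    ∀ s t : S, s = t * sInv s * s →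
      θ.I s ≤ θ.I t ∧
      (∀ a ∈ θ.I s, π a * v s = π a * v t) ∧
      {y : E →L[ℂ] E | ∃ a ∈ θ.I s, π a * v s = y} ⊆
        {y : E →L[ℂ] E | ∃ a ∈ θ.I t, π a * v t = y} := by
  intro s t h
  have hse : s = t * (sInv s * s) := by rw [← mul_assoc]; exact h
  have hIst : θ.I s ≤ θ.I t := I_mono hS θ s t hse
  have hflip : s * sInv s * t = s := le_flip hS h
  have hf : (s * sInv s) * (s * sInv s) = s * sInv s := idem_mul_self_right hS s
  have key : ∀ a ∈ θ.I s, π a * v s = π a * v t := by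
    intro a ha
    have ha' : a ∈ θ.I (s * sInv s) := I_le_I_range hS θ s ha
    have hp1 : π a * v (s * sInv s) = π a := pi_idem_v hS θ hcov hf ha'
    calc π a * v s = π a * v (s * sInv s * t) := by rw [hflip]
      _ = π a * (v (s * sInv s) * v t) := by rw [hcov.v_mul]
      _ = (π a * v (s * sInv s)) * v t := by rw [mul_assoc]
      _ = π a * v t := by rw [hp1]
  refine ⟨hIst, key, ?_⟩
  rintro y ⟨a, ha, rfl⟩
  exact ⟨a, hIst ha, (key a ha).symm⟩
end

section
/- Let (π, v) be a covariant representation of an inverse semigroup action α : S ↷ A on a Banach space E, let e ∈ E(S) be an idempotent, and let (μ_i) be a contractive two-sided approximate unit of the ideal I_e. Then the operators π(μ_i) converge strongly to v_e, i.e. ‖π(μ_i)ξ − v_e ξ‖ → 0 for every ξ ∈ E. -/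
set_option autoImplicit false

open Filter Topology

/-- for a covariant representation `(π, v)` on `E`, an idempotent
`e ∈ E(S)` and a contractive two-sided approximate unit `(μ_i)` of `I_e`, the
operators `π(μ_i)` converge strongly to `v e`. -/
theorem covariantRep_approxUnit_tendsto_strongly
    {S A E : Type*} [Semigroup S] [NonUnitalNormedRing A] [NormedSpace ℂ A]
    [NormedAddCommGroup E] [NormedSpace ℂ E]
    (sInv : S → S) (hS : IsInvSemigroup S sInv)
    (θ : InvSemigroupAction S sInv A)
    (π : A → E →L[ℂ] E) (v : S → E →L[ℂ] E)
    (hcov : IsCovariantRep θ π v)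
    (e : S) (he : e * e = e)
    {ι : Type*} (l : Filter ι) (μ : ι → A) (hne : l.NeBot)
    (hμ : ∀ i, μ i ∈ θ.I e ∧ ‖μ i‖ ≤ 1)
    (happ : ∀ a ∈ θ.I e,
      Tendsto (fun i => μ i * a) l (𝓝 a) ∧ Tendsto (fun i => a * μ i) l (𝓝 a)) :
    ∀ ξ : E, Tendsto (fun i => π (μ i) ξ) l (𝓝 (v e ξ)) := by
  have hsInv : sInv e = e := (hS.2.2 e e (by rw [he, he]) (by rw [he, he])).symm
  have π_sub : ∀ a b : A, π (a - b) = π a - π b := by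
    intro a b
    have hneg : π (-b) = -π b := by
      have := hcov.π_smul (-1) b
      simpa using this
    rw [sub_eq_add_neg, hcov.π_add, hneg, sub_eq_add_neg]
  have hact : ∀ a ∈ θ.I e, θ.act e a = a := by
    intro a ha
    obtain ⟨b, hb, hba⟩ := θ.act_surjOn e a ha
    have hb' : b ∈ θ.I (sInv (e * e)) := by rw [he]; exact hb
    have hc := θ.comp_act e e b hb'
    rw [hba] at hc
    rw [hc]
    rw [he] at *
    exact hba
  have hve_fix : ∀ x ∈ Set.range (v e), v e x = x := by
    rintro x ⟨ζ, rfl⟩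
    have hvv : v e * v e = v e := by rw [← hcov.v_mul, he]
    calc v e (v e ζ) = (v e * v e) ζ := rfl
      _ = v e ζ := by rw [hvv]
  have hπv : ∀ a ∈ θ.I e, ∀ ξ : E, π a (v e ξ) = π a ξ := by
    intro a ha ξ
    have ha' : a ∈ θ.I (sInv e) := by rw [hsInv]; exact ha
    have h1 : v e * π a = π a * v e := by
      have h := hcov.scr1 e a ha'
      rw [hact a ha] at h
      exact h
    have h2 : π a ξ ∈ Set.range (v e) := by
      rw [hcov.scr2 e]
      exact subset_closure (Submodule.subset_span ⟨a, ha, ξ, rfl⟩)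
    calc π a (v e ξ) = (π a * v e) ξ := rfl
      _ = (v e * π a) ξ := by rw [← h1]
      _ = v e (π a ξ) := rfl
      _ = π a ξ := hve_fix _ h2
  set M := Submodule.span ℂ {x : E | ∃ a ∈ θ.I e, ∃ ζ : E, π a ζ = x} with hMdef
  have hM : ∀ x ∈ M, Tendsto (fun i => π (μ i) x) l (𝓝 x) := by
    intro x hx
    induction hx using Submodule.span_induction with
    | mem x hx =>
      obtain ⟨a, ha, ζ, rfl⟩ := hx
      have hfun : (fun i => π (μ i) (π a ζ)) = fun i => π (μ i * a) ζ := by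
        funext i
        rw [hcov.π_mul]
        rfl
      rw [hfun]
      have h1 : Tendsto (fun i => μ i * a) l (𝓝 a) := (happ a ha).1
      rw [tendsto_iff_norm_sub_tendsto_zero]
      have hb : ∀ i, ‖π (μ i * a) ζ - π a ζ‖ ≤ ‖μ i * a - a‖ * ‖ζ‖ := by
        intro i
        have heq : π (μ i * a) ζ - π a ζ = π (μ i * a - a) ζ := by
          rw [π_sub]; rfl
        rw [heq]
        calc ‖π (μ i * a - a) ζ‖ ≤ ‖π (μ i * a - a)‖ * ‖ζ‖ :=
              ContinuousLinearMap.le_opNorm _ _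
          _ ≤ ‖μ i * a - a‖ * ‖ζ‖ := by
              gcongr
              exact hcov.π_norm _
      have h0 : Tendsto (fun i => ‖μ i * a - a‖ * ‖ζ‖) l (𝓝 0) := by
        have := (tendsto_iff_norm_sub_tendsto_zero.mp h1).mul_const ‖ζ‖
        simpa using this
      exact squeeze_zero (fun i => norm_nonneg _) hb h0
    | zero => simp only [map_zero]; exact tendsto_const_nhds
    | add x y hx hy ihx ihy =>
      have := ihx.add ihy
      simpa [map_add] using this
    | smul c x hx ih =>
      have := ih.const_smul c
      simpa [map_smul] using this
  have hclos : ∀ η ∈ closure (M : Set E), Tendsto (fun i => π (μ i) η) l (𝓝 η) := by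
    intro η hη
    rw [Metric.tendsto_nhds]
    intro ε hε
    obtain ⟨x, hxM, hxd⟩ := Metric.mem_closure_iff.mp hη (ε / 3) (by linarith)
    have hx := Metric.tendsto_nhds.mp (hM x hxM) (ε / 3) (by linarith)
    filter_upwards [hx] with i hi
    have hbound : ‖π (μ i)‖ ≤ 1 := le_trans (hcov.π_norm _) (hμ i).2
    have h1 : dist (π (μ i) η) (π (μ i) x) ≤ dist η x := by
      rw [dist_eq_norm, dist_eq_norm, ← map_sub]
      calc ‖π (μ i) (η - x)‖ ≤ ‖π (μ i)‖ * ‖η - x‖ := ContinuousLinearMap.le_opNorm _ _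
        _ ≤ 1 * ‖η - x‖ := by gcongr
        _ = ‖η - x‖ := one_mul _
    have htri : dist (π (μ i) η) η ≤
        dist (π (μ i) η) (π (μ i) x) + dist (π (μ i) x) x + dist x η :=
      dist_triangle4 _ _ _ _
    have hxη : dist x η = dist η x := dist_comm _ _
    have : dist (π (μ i) η) η < ε / 3 + ε / 3 + ε / 3 := by
      have := h1.trans_lt hxd
      rw [hxη] at htri
      linarith
    linarith
  intro ξ
  have hη : v e ξ ∈ closure (M : Set E) := by
    have hr : v e ξ ∈ Set.range (v e) := ⟨ξ, rfl⟩
    rwa [hcov.scr2 e] at hr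
  exact (hclos (v e ξ) hη).congr fun i => hπv (μ i) (hμ i).1 ξ
end

section
/- Let H be a Hilbert space and let u, w ∈ B(H) be contractions (‖u‖ ≤ 1 and ‖w‖ ≤ 1) such that u w u = u and w u w = w. Then u is a partial isometry and w = u* (the Hilbert space adjoint of u). -/
set_option autoImplicit false

/-!
If `w u x = x`, then `‖x‖ ≤ ‖u x‖ ≤ ‖x‖`, and a contraction `u` attaining its norm at `x` satisfies
`u* u x = x`. Applied to `x = w u y` this gives `u* u = w u`, and symmetrically `w* w = u w`. So
`u w` is self-adjoint and `w = (u* u) w = u* (u w)* = (u w u)* = u*`. Finally `u u* u = u` forces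
`u* u` to fix every vector orthogonal to `ker u`.
-/

open scoped InnerProductSpace

theorem eq_star_of_star_mul_self_eq {R : Type*} [Monoid R] [StarMul R] {a b : R}
    (hab : a * b * a = a) (hba : b * a * b = b) (ha : star a * a = b * a)
    (hb : star b * b = a * b) : b = star a := by
  have hsa : star (a * b) = a * b := by rw [← hb, star_mul, star_star]
  calc b = b * a * b := hba.symm
    _ = star a * star (a * b) := by rw [← ha, hsa, mul_assoc]
    _ = star (a * b * a) := (star_mul _ _).symm
    _ = star a := by rw [hab]

namespace ContinuousLinearMap

variable {𝕜 E F : Type*} [RCLike 𝕜]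
  [NormedAddCommGroup E] [InnerProductSpace 𝕜 E] [CompleteSpace E]
  [NormedAddCommGroup F] [InnerProductSpace 𝕜 F] [CompleteSpace F]

omit [CompleteSpace E] [CompleteSpace F] in
theorem norm_apply_eq_of_apply_apply_eq {u : E →L[𝕜] F} {w : F →L[𝕜] E}
    (hu : ‖u‖ ≤ 1) (hw : ‖w‖ ≤ 1) {x : E} (hx : w (u x) = x) : ‖u x‖ = ‖x‖ :=
  le_antisymm (by simpa using u.le_of_opNorm_le hu x) <| by
    simpa [hx] using w.le_of_opNorm_le hw (u x)

theorem adjoint_apply_apply_eq_of_norm_apply_eq {v : E →L[𝕜] F} (hv : ‖v‖ ≤ 1) {x : E}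
    (hx : ‖v x‖ = ‖x‖) : adjoint v (v x) = x := by
  have hle : ‖adjoint v (v x)‖ ≤ ‖x‖ := by
    simpa [hx] using (adjoint v).le_of_opNorm_le ((adjoint.norm_map v).trans_le hv) (v x)
  have hre : RCLike.re ⟪adjoint v (v x), x⟫_𝕜 = ‖x‖ ^ 2 := by
    rw [adjoint_inner_left, ← hx, inner_self_eq_norm_sq]
  -- `‖v* v x - x‖² = ‖v* v x‖² - 2‖x‖² + ‖x‖²`
  have hsq : ‖adjoint v (v x) - x‖ ^ 2 ≤ 0 := by
    rw [@norm_sub_sq 𝕜, hre]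
    nlinarith [norm_nonneg (adjoint v (v x)), norm_nonneg x]
  exact sub_eq_zero.mp <| norm_eq_zero.mp <|
    (pow_eq_zero_iff two_ne_zero).mp (le_antisymm hsq (sq_nonneg _))

theorem adjoint_comp_self_eq_of_comp_comp_eq {u : E →L[𝕜] F} {w : F →L[𝕜] E}
    (hu : ‖u‖ ≤ 1) (hw : ‖w‖ ≤ 1) (huwu : u ∘L w ∘L u = u) : adjoint u ∘L u = w ∘L u := by
  have huwu' (x : E) : u (w (u x)) = u x := congr($huwu x)
  ext x
  have hfix : w (u (w (u x))) = w (u x) := by rw [huwu']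
  simpa [huwu'] using
    adjoint_apply_apply_eq_of_norm_apply_eq hu (norm_apply_eq_of_apply_apply_eq hu hw hfix)

theorem norm_apply_eq_of_mem_orthogonal_ker {u : E →L[𝕜] F} (hu : u ∘L adjoint u ∘L u = u) {x : E}
    (hx : x ∈ (LinearMap.ker (u : E →ₗ[𝕜] F))ᗮ) : ‖u x‖ = ‖x‖ := by
  have hker : x - adjoint u (u x) ∈ LinearMap.ker (u : E →ₗ[𝕜] F) := by
    simpa [sub_eq_zero] using congr($hu x).symm
  have hperp : x - adjoint u (u x) ∈ (LinearMap.ker (u : E →ₗ[𝕜] F))ᗮ := by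
    refine sub_mem hx ?_
    rw [orthogonal_ker]
    exact Submodule.le_topologicalClosure _ ⟨u x, rfl⟩
  have hfix : adjoint u (u x) = x :=
    (sub_eq_zero.mp (Submodule.disjoint_def.mp (Submodule.orthogonal_disjoint _) _ hker hperp)).symm
  have hsq : ‖u x‖ ^ 2 = ‖x‖ ^ 2 := by
    rw [← inner_self_eq_norm_sq (𝕜 := 𝕜), ← adjoint_inner_left, hfix, inner_self_eq_norm_sq]
  exact (sq_eq_sq₀ (norm_nonneg _) (norm_nonneg _)).mp hsq

end ContinuousLinearMap

/-- if `u, w` are contractions on a Hilbert space `H` with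
`u w u = u` and `w u w = w`, then `u` is a partial isometry (isometric on the
orthogonal complement of its kernel) and `w = u*`. -/
theorem contraction_generalized_inverse_partialIsometry
    {H : Type*} [NormedAddCommGroup H] [InnerProductSpace ℂ H] [CompleteSpace H]
    (u w : H →L[ℂ] H) (hu : ‖u‖ ≤ 1) (hw : ‖w‖ ≤ 1)
    (huwu : u * w * u = u) (hwuw : w * u * w = w) :
    (∀ x ∈ (LinearMap.ker (u : H →ₗ[ℂ] H))ᗮ, ‖u x‖ = ‖x‖) ∧ w = ContinuousLinearMap.adjoint u := by
  have hu_adj : star u * u = w * u :=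
    ContinuousLinearMap.adjoint_comp_self_eq_of_comp_comp_eq hu hw huwu
  have hw_adj : star w * w = u * w :=
    ContinuousLinearMap.adjoint_comp_self_eq_of_comp_comp_eq hw hu hwuw
  have hw_eq : w = ContinuousLinearMap.adjoint u :=
    eq_star_of_star_mul_self_eq huwu hwuw hu_adj hw_adj
  exact ⟨fun x => ContinuousLinearMap.norm_apply_eq_of_mem_orthogonal_ker (hw_eq ▸ huwu), hw_eq⟩
end

section
/- Let A be a C*-algebra, let α : S ↷ A be an inverse semigroup action, and let (π, v) be a covariant representation of α on a Hilbert space H, where π : A → B(H) is a *-homomorphism. Then for every t ∈ S one has v_{t*} = (v_t)* (the Hilbert space adjoint), and for every a_t ∈ I_t: (π(a_t) v_t)* = π(α_{t*}(a_t*)) v_{t*}. Consequently, setting A_t := { π(a) v_t : a ∈ I_t }, one has (A_t)* = A_{t*} for all t ∈ S. -/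
set_option autoImplicit false

open Filter Topology

section Aux


variable {H : Type*} [NormedAddCommGroup H] [InnerProductSpace ℂ H] [CompleteSpace H]

local notation "⟪" x ", " y "⟫" => @inner ℂ _ _ x y

/-- A contractive idempotent on a Hilbert space is self-adjoint. -/
lemma aux_adjoint_eq_of_idempotent (p : H →L[ℂ] H)
    (hp : p * p = p) (hnorm : ‖p‖ ≤ 1) : ContinuousLinearMap.adjoint p = p := by
  have happ : ∀ ξ, p (p ξ) = p ξ := fun ξ => by
    rw [← ContinuousLinearMap.mul_apply, hp]
  have orth : ∀ ξ η : H, p ξ = ξ → p η = 0 → ⟪ξ, η⟫ = 0 := by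
    intro ξ η hξ hη
    by_contra hne
    have hη0 : η ≠ 0 := by rintro rfl; simp at hne
    have hηn : (0:ℝ) < ‖η‖ := norm_pos_iff.mpr hη0
    have han : (0:ℝ) < ‖⟪ξ, η⟫‖ := norm_pos_iff.mpr hne
    set t : ℝ := 1 / ‖η‖^2 with ht
    have htpos : 0 < t := by positivity
    set c : ℂ := -(t : ℂ) * (starRingEnd ℂ) ⟪ξ, η⟫ with hc
    have hle : ‖ξ‖ ≤ ‖ξ + c • η‖ := by
      have hfix : p (ξ + c • η) = ξ := by
        rw [map_add, map_smul, hξ, hη, smul_zero, add_zero]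
      calc ‖ξ‖ = ‖p (ξ + c • η)‖ := by rw [hfix]
        _ ≤ ‖p‖ * ‖ξ + c • η‖ := p.le_opNorm _
        _ ≤ 1 * ‖ξ + c • η‖ := mul_le_mul_of_nonneg_right hnorm (norm_nonneg _)
        _ = ‖ξ + c • η‖ := one_mul _
    have hsq : ‖ξ‖^2 ≤ ‖ξ + c • η‖^2 := by
      have := pow_le_pow_left₀ (norm_nonneg ξ) hle 2
      exact this
    rw [norm_add_sq (𝕜 := ℂ)] at hsq
    have h1 : ⟪ξ, c • η⟫ = c * ⟪ξ, η⟫ := inner_smul_right _ _ _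
    have h3 : RCLike.re ⟪ξ, c • η⟫ = -(t * ‖⟪ξ, η⟫‖^2) := by
      rw [h1, hc, mul_assoc, RCLike.conj_mul]
      simp [← Complex.ofReal_pow]
    have h4 : ‖c • η‖ = (t * ‖⟪ξ, η⟫‖) * ‖η‖ := by
      rw [norm_smul, hc, norm_mul, norm_neg, RCLike.norm_conj]
      congr 2
      simpa using abs_of_pos htpos
    rw [h3, h4] at hsq
    have hts : t * ‖η‖^2 = 1 := by
      rw [ht]; field_simp
    have h5 : (t * ‖⟪ξ, η⟫‖ * ‖η‖)^2 = t * ‖⟪ξ, η⟫‖^2 := by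
      rw [ht]; field_simp
    nlinarith [mul_pos htpos (mul_pos han han), hsq, h5]
  symm
  rw [ContinuousLinearMap.eq_adjoint_iff]
  intro x y
  have hky : p (y - p y) = 0 := by rw [map_sub, happ, sub_self]
  have hkx : p (x - p x) = 0 := by rw [map_sub, happ, sub_self]
  have e1 : ⟪p x, y⟫ = ⟪p x, p y⟫ := by
    have h0 : ⟪p x, y - p y⟫ = 0 := orth (p x) (y - p y) (happ x) hky
    have h := inner_sub_right (𝕜 := ℂ) (p x) y (p y)
    rw [h0] at h
    exact sub_eq_zero.mp h.symm
  have e2 : ⟪x, p y⟫ = ⟪p x, p y⟫ := by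
    have h0 : ⟪p y, x - p x⟫ = 0 := orth (p y) (x - p x) (happ y) hkx
    have h0' : ⟪x - p x, p y⟫ = 0 := inner_eq_zero_symm.mp h0
    have h := inner_sub_left (𝕜 := ℂ) x (p x) (p y)
    rw [h0'] at h
    exact sub_eq_zero.mp h.symm
  rw [e1, e2]

/-- A contractive generalized inverse of a contraction on a Hilbert space is its adjoint. -/
lemma aux_adjoint_of_gen_inverse (u w : H →L[ℂ] H)
    (hu : ‖u‖ ≤ 1) (hw : ‖w‖ ≤ 1) (huwu : u * w * u = u) (hwuw : w * u * w = w) :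
    w = ContinuousLinearMap.adjoint u := by
  have hp : (w * u) * (w * u) = w * u := by
    calc (w * u) * (w * u) = (w * u * w) * u := by noncomm_ring
      _ = w * u := by rw [hwuw]
  have hq : (u * w) * (u * w) = u * w := by
    calc (u * w) * (u * w) = (u * w * u) * w := by noncomm_ring
      _ = u * w := by rw [huwu]
  have hpn : ‖w * u‖ ≤ 1 :=
    le_trans (norm_mul_le w u) (mul_le_one₀ hw (norm_nonneg _) hu)
  have hqn : ‖u * w‖ ≤ 1 :=
    le_trans (norm_mul_le u w) (mul_le_one₀ hu (norm_nonneg _) hw)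
  have hpadj := aux_adjoint_eq_of_idempotent _ hp hpn
  have hqadj := aux_adjoint_eq_of_idempotent _ hq hqn
  -- key : adjoint u * u = w * u
  have hfix : ∀ ξ, (w * u) ((w * u) ξ) = (w * u) ξ := fun ξ => by
    rw [← ContinuousLinearMap.mul_apply, hp]
  have hkey1 : ∀ ξ : H, (w * u) ξ = ξ → (ContinuousLinearMap.adjoint u) (u ξ) = ξ := by
    intro ξ hξ
    set y := (ContinuousLinearMap.adjoint u) (u ξ) with hy
    have hnu : ‖u ξ‖ = ‖ξ‖ := by
      refine le_antisymm ?_ ?_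
      · calc ‖u ξ‖ ≤ ‖u‖ * ‖ξ‖ := u.le_opNorm ξ
          _ ≤ 1 * ‖ξ‖ := mul_le_mul_of_nonneg_right hu (norm_nonneg _)
          _ = ‖ξ‖ := one_mul _
      · calc ‖ξ‖ = ‖w (u ξ)‖ := by rw [← ContinuousLinearMap.mul_apply, hξ]
          _ ≤ ‖w‖ * ‖u ξ‖ := w.le_opNorm _
          _ ≤ 1 * ‖u ξ‖ := mul_le_mul_of_nonneg_right hw (norm_nonneg _)
          _ = ‖u ξ‖ := one_mul _
    have hny : ‖y‖ ≤ ‖ξ‖ := by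
      calc ‖y‖ ≤ ‖ContinuousLinearMap.adjoint u‖ * ‖u ξ‖ :=
            (ContinuousLinearMap.adjoint u).le_opNorm _
        _ ≤ 1 * ‖ξ‖ := by
            rw [ContinuousLinearMap.adjoint.norm_map u]
            exact mul_le_mul hu (le_of_eq hnu) (norm_nonneg _) zero_le_one
        _ = ‖ξ‖ := one_mul _
    have hre : RCLike.re ⟪y, ξ⟫ = ‖ξ‖^2 := by
      rw [hy, ContinuousLinearMap.adjoint_inner_left]
      rw [inner_self_eq_norm_sq (𝕜 := ℂ), hnu]
    have hdist : ‖y - ξ‖^2 ≤ 0 := by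
      rw [norm_sub_sq (𝕜 := ℂ), hre]
      nlinarith [norm_nonneg y, norm_nonneg ξ]
    have : ‖y - ξ‖ = 0 := by nlinarith [norm_nonneg (y - ξ)]
    have := norm_eq_zero.mp this
    exact sub_eq_zero.mp this
  have hup : u * (w * u) = u := by rw [← mul_assoc]; exact huwu
  have hkey : ContinuousLinearMap.adjoint u * u = w * u := by
    ext ξ
    have h1 : u ξ = u ((w * u) ξ) := by
      conv_lhs => rw [← hup]
      rw [ContinuousLinearMap.mul_apply]
    rw [ContinuousLinearMap.mul_apply, h1, hkey1 _ (hfix ξ)]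
  -- final: adjoint u = adjoint u * (u * w) = (adjoint u * u) * w = (w * u) * w = w
  have h2 : ContinuousLinearMap.adjoint u = ContinuousLinearMap.adjoint u * (u * w) := by
    have hqstar : star (u * w) = u * w := by
      rw [ContinuousLinearMap.star_eq_adjoint]; exact hqadj
    conv_lhs => rw [← huwu]
    rw [← ContinuousLinearMap.star_eq_adjoint, ← ContinuousLinearMap.star_eq_adjoint,
      star_mul, hqstar]
  calc w = (w * u) * w := by rw [hwuw]
    _ = (ContinuousLinearMap.adjoint u * u) * w := by rw [hkey]
    _ = ContinuousLinearMap.adjoint u * (u * w) := by rw [mul_assoc]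
    _ = ContinuousLinearMap.adjoint u := h2.symm
  
end Aux

section AuxStar

variable {S : Type*} [Semigroup S] {sInv : S → S}
variable {A : Type*} [NonUnitalNormedRing A] [StarRing A] [CStarRing A] [NormedSpace ℂ A]

/-- Closed two-sided ideals with right approximate units in a C*-algebra are star-closed. -/
lemma aux_star_mem_ideal (θ : InvSemigroupAction S sInv A) (t : S) (a : A)
    (ha : a ∈ θ.I t) : star a ∈ θ.I t := by
  obtain ⟨l, hne, hev, hunit⟩ := θ.approx_unit t
  haveI := hne
  have hb : star a * a ∈ θ.I t := θ.ideal_mul_left t (star a) a ha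
  obtain ⟨h1, -⟩ := hunit _ hb
  have h1' : Tendsto (fun x => ‖x * (star a * a) - star a * a‖) l (𝓝 0) :=
    tendsto_iff_norm_sub_tendsto_zero.mp h1
  have hnorm : ∀ᶠ x in l, ‖x * star a - star a‖ ≤
      Real.sqrt (2 * ‖x * (star a * a) - star a * a‖) := by
    filter_upwards [hev] with x hx
    obtain ⟨hxI, hx1⟩ := hx
    apply Real.le_sqrt_of_sq_le
    have hCstar : ‖x * star a - star a‖ ^ 2
        = ‖(x * star a - star a) * star (x * star a - star a)‖ := by
      rw [CStarRing.norm_self_mul_star, sq]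
    have hexp : (x * star a - star a) * star (x * star a - star a)
        = (x * (star a * a) - star a * a) * star x - (x * (star a * a) - star a * a) := by
      simp only [star_sub, star_mul, star_star]
      noncomm_ring
    rw [hCstar, hexp]
    have hxs : ‖star x‖ ≤ 1 := by rw [norm_star]; exact hx1
    calc ‖(x * (star a * a) - star a * a) * star x - (x * (star a * a) - star a * a)‖
        ≤ ‖(x * (star a * a) - star a * a) * star x‖ + ‖x * (star a * a) - star a * a‖ :=
          norm_sub_le _ _
      _ ≤ ‖x * (star a * a) - star a * a‖ * ‖star x‖ + ‖x * (star a * a) - star a * a‖ := by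
          gcongr; exact norm_mul_le _ _
      _ ≤ ‖x * (star a * a) - star a * a‖ * 1 + ‖x * (star a * a) - star a * a‖ := by
          gcongr
      _ = 2 * ‖x * (star a * a) - star a * a‖ := by ring
  have hsqrt : Tendsto (fun x => Real.sqrt (2 * ‖x * (star a * a) - star a * a‖)) l (𝓝 0) := by
    have : Tendsto (fun x => 2 * ‖x * (star a * a) - star a * a‖) l (𝓝 0) := by
      simpa using h1'.const_mul 2
    have h0 := (Real.continuous_sqrt.tendsto 0).comp this
    rw [Real.sqrt_zero] at h0
    exact h0
  have h2 : Tendsto (fun x => ‖x * star a - star a‖) l (𝓝 0) :=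
    squeeze_zero' (Eventually.of_forall fun x => norm_nonneg _) hnorm hsqrt
  have h3 : Tendsto (fun x => x * star a) l (𝓝 (star a)) :=
    tendsto_iff_norm_sub_tendsto_zero.mpr h2
  exact (θ.ideal_closed t).mem_of_tendsto h3
    (by filter_upwards [hev] with x hx using θ.ideal_mul_right t (star a) x hx.1)

end AuxStar

/-- for a covariant representation `(π, v)` of an inverse semigroup
action on a C*-algebra `A`, on a Hilbert space `H`, with `π` a *-homomorphism:
`v_{t*} = (v_t)*`, `(π(a_t) v_t)* = π(α_{t*}(a_t*)) v_{t*}`, and `(A_t)* = A_{t*}`. -/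
theorem covariantRep_star_grading
    {S A H : Type*} [Semigroup S]
    [NonUnitalNormedRing A] [StarRing A] [CStarRing A] [NormedSpace ℂ A]
    [StarModule ℂ A] [CompleteSpace A]
    [NormedAddCommGroup H] [InnerProductSpace ℂ H] [CompleteSpace H]
    (sInv : S → S) (hS : IsInvSemigroup S sInv)
    (θ : InvSemigroupAction S sInv A)
    (π : A → H →L[ℂ] H) (v : S → H →L[ℂ] H)
    (hcov : IsCovariantRep θ π v)
    (hπ_star : ∀ a : A, π (star a) = ContinuousLinearMap.adjoint (π a)) :
    (∀ t : S, v (sInv t) = ContinuousLinearMap.adjoint (v t)) ∧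
    (∀ t : S, ∀ a ∈ θ.I t,
      ContinuousLinearMap.adjoint (π a * v t) =
        π (θ.act (sInv t) (star a)) * v (sInv t)) ∧
    (∀ t : S,
      (fun x : H →L[ℂ] H => ContinuousLinearMap.adjoint x) ''
          {y : H →L[ℂ] H | ∃ a ∈ θ.I t, π a * v t = y} =
        {y : H →L[ℂ] H | ∃ a ∈ θ.I (sInv t), π a * v (sInv t) = y}) := by
  have hinv : ∀ t : S, sInv (sInv t) = t :=
    fun t => (hS.2.2 (sInv t) t (hS.2.1 t) (hS.1 t)).symm
  have part1 : ∀ t : S, v (sInv t) = ContinuousLinearMap.adjoint (v t) := by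
    intro t
    refine aux_adjoint_of_gen_inverse (v t) (v (sInv t)) (hcov.v_norm t) (hcov.v_norm _) ?_ ?_
    · rw [← hcov.v_mul, ← hcov.v_mul, hS.1 t]
    · rw [← hcov.v_mul, ← hcov.v_mul, hS.2.1 t]
  have part2 : ∀ t : S, ∀ a ∈ θ.I t,
      ContinuousLinearMap.adjoint (π a * v t) =
        π (θ.act (sInv t) (star a)) * v (sInv t) := by
    intro t a ha
    have hstar : star a ∈ θ.I t := aux_star_mem_ideal θ t a ha
    have hmem : star a ∈ θ.I (sInv (sInv t)) := by rw [hinv t]; exact hstar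
    rw [← ContinuousLinearMap.star_eq_adjoint, star_mul,
      ContinuousLinearMap.star_eq_adjoint, ContinuousLinearMap.star_eq_adjoint,
      ← part1, ← hπ_star]
    exact hcov.scr1 (sInv t) (star a) hmem
  refine ⟨part1, part2, ?_⟩
  intro t
  ext y
  constructor
  · rintro ⟨x, ⟨a, ha, rfl⟩, rfl⟩
    have hstar : star a ∈ θ.I t := aux_star_mem_ideal θ t a ha
    have hmem : star a ∈ θ.I (sInv (sInv t)) := by rw [hinv t]; exact hstar
    exact ⟨θ.act (sInv t) (star a), θ.act_mem (sInv t) (star a) hmem,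
      (part2 t a ha).symm⟩
  · rintro ⟨b, hb, rfl⟩
    have h2 := part2 (sInv t) b hb
    rw [hinv t] at h2
    have hmem : θ.act t (star b) ∈ θ.I t :=
      θ.act_mem t (star b) (aux_star_mem_ideal θ (sInv t) b hb)
    exact ⟨ContinuousLinearMap.adjoint (π b * v (sInv t)),
      ⟨θ.act t (star b), hmem, h2.symm⟩,
      ContinuousLinearMap.adjoint_adjoint _⟩
end
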